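/- arXiv:2112.09093 — 11 statements merged into one kernel-verified Lean document; each statement's English description precedes it below -/
import Mathlib

section
/- Generalized Bézout identity (Theorem 1(a)): Let M, N, M̃, Ñ, X, Y, X̃, Ỹ be matrices over RatFunc ℝ of sizes M (m×m), N (p×m), M̃ (p×p), Ñ (p×m), X (m×p), Y (m×m), X̃ (m×p), Ỹ (p×p) satisfying the Bézout identity [[Y, X],[−Ñ, M̃]] · [[M, −X̃],[N, Ỹ]] = I_{m+p}, and let Q be any m×p matrix over RatFunc ℝ. Define X_Q := X + Q·M̃, Y_Q := Y − Q·Ñ, X̃_Q := X̃ + M·Q, Ỹ_Q := Ỹ − N·Q. Then [[Y_Q, X_Q],[−Ñ, M̃]] · [[M, −X̃_Q],[N, Ỹ_Q]] = I_{m+p}. -/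
open Matrix

noncomputable section

/-- **Generalized Bézout identity (Theorem 1(a)).**
Given eight matrices over `RatFunc ℝ` satisfying the Bézout identity, and any
Youla parameter `Q`, the `Q`-modified factors also satisfy the Bézout identity. -/
theorem generalized_bezout_identity {m p : ℕ}
    (M : Matrix (Fin m) (Fin m) (RatFunc ℝ)) (N : Matrix (Fin p) (Fin m) (RatFunc ℝ))
    (Mt : Matrix (Fin p) (Fin p) (RatFunc ℝ)) (Nt : Matrix (Fin p) (Fin m) (RatFunc ℝ))
    (X : Matrix (Fin m) (Fin p) (RatFunc ℝ)) (Y : Matrix (Fin m) (Fin m) (RatFunc ℝ))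
    (Xt : Matrix (Fin m) (Fin p) (RatFunc ℝ)) (Yt : Matrix (Fin p) (Fin p) (RatFunc ℝ))
    (hBez : Matrix.fromBlocks Y X (-Nt) Mt * Matrix.fromBlocks M (-Xt) N Yt = 1)
    (Q : Matrix (Fin m) (Fin p) (RatFunc ℝ))
    (XQ : Matrix (Fin m) (Fin p) (RatFunc ℝ)) (hXQ : XQ = X + Q * Mt)
    (YQ : Matrix (Fin m) (Fin m) (RatFunc ℝ)) (hYQ : YQ = Y - Q * Nt)
    (XtQ : Matrix (Fin m) (Fin p) (RatFunc ℝ)) (hXtQ : XtQ = Xt + M * Q)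
    (YtQ : Matrix (Fin p) (Fin p) (RatFunc ℝ)) (hYtQ : YtQ = Yt - N * Q) :
    Matrix.fromBlocks YQ XQ (-Nt) Mt * Matrix.fromBlocks M (-XtQ) N YtQ = 1 := by
  subst hXQ hYQ hXtQ hYtQ
  have h1 : Matrix.fromBlocks (Y - Q * Nt) (X + Q * Mt) (-Nt) Mt =
      Matrix.fromBlocks 1 Q 0 1 * Matrix.fromBlocks Y X (-Nt) Mt := by
    rw [Matrix.fromBlocks_multiply]
    simp [sub_eq_add_neg, mul_neg]
  have h2 : Matrix.fromBlocks M (-(Xt + M * Q)) N (Yt - N * Q) =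
      Matrix.fromBlocks M (-Xt) N Yt * Matrix.fromBlocks 1 (-Q) 0 1 := by
    rw [Matrix.fromBlocks_multiply]
    simp [sub_eq_add_neg, mul_neg, neg_add, add_comm]
  rw [h1, h2, mul_assoc, ← mul_assoc (Matrix.fromBlocks Y X (-Nt) Mt), hBez, one_mul,
    Matrix.fromBlocks_multiply]
  simp [Matrix.fromBlocks_one]
end
end

section
/- Equality of the two coprime factorizations of the Youla-parameterized controller (part of Theorem 1(b)): Let M, N, M̃, Ñ, X, Y, X̃, Ỹ be matrices over RatFunc ℝ of sizes M (m×m), N (p×m), M̃ (p×p), Ñ (p×m), X (m×p), Y (m×m), X̃ (m×p), Ỹ (p×p) satisfying [[Y, X],[−Ñ, M̃]] · [[M, −X̃],[N, Ỹ]] = I_{m+p}, let Q be an m×p matrix over RatFunc ℝ, and define X_Q := X + Q·M̃, Y_Q := Y − Q·Ñ, X̃_Q := X̃ + M·Q, Ỹ_Q := Ỹ − N·Q. If Y_Q and Ỹ_Q are invertible, then Y_Q⁻¹ · X_Q = X̃_Q · Ỹ_Q⁻¹. -/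
open Matrix

noncomputable section

/-!
The Youla parameterization multiplies the doubly coprime factorization by unimodular block
triangular matrices: `[[Y_Q, X_Q], [-Ñ, M̃]] = [[1, Q], [0, 1]] · [[Y, X], [-Ñ, M̃]]` and
`[[M, -X̃_Q], [N, Ỹ_Q]] = [[M, -X̃], [N, Ỹ]] · [[1, -Q], [0, 1]]`, and these two triangular
factors are mutually inverse. So the parameterized factorization satisfies the same Bezout
identity, whose off-diagonal block reads `Y_Q X̃_Q = X_Q Ỹ_Q`.
-/

namespace Matrix

variable {R : Type*} [CommRing R] {m p : Type*} [Fintype m] [Fintype p]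
  [DecidableEq m] [DecidableEq p]

theorem inv_mul_eq_mul_inv_of_mul_eq_mul {A : Matrix m m R} {B : Matrix p p R}
    {C D : Matrix m p R} (hA : IsUnit A) (hB : IsUnit B) (h : A * C = D * B) :
    A⁻¹ * D = C * B⁻¹ := by
  have hA' : A⁻¹ * A = 1 := nonsing_inv_mul A ((isUnit_iff_isUnit_det A).mp hA)
  have hB' : B * B⁻¹ = 1 := mul_nonsing_inv B ((isUnit_iff_isUnit_det B).mp hB)
  calc A⁻¹ * D
      _ = A⁻¹ * (D * B) * B⁻¹ := by rw [Matrix.mul_assoc, Matrix.mul_assoc, hB', Matrix.mul_one]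
      _ = A⁻¹ * (A * C) * B⁻¹ := by rw [h]
      _ = C * B⁻¹ := by rw [← Matrix.mul_assoc A⁻¹, hA', Matrix.one_mul]

theorem mul_eq_mul_of_fromBlocks_mul_fromBlocks_eq_one {A E : Matrix m m R}
    {B F : Matrix m p R} {C G : Matrix p m R} {D H : Matrix p p R}
    (h : fromBlocks A B C D * fromBlocks E (-F) G H = 1) : A * F = B * H := by
  have h₁₂ := congrArg toBlocks₁₂ h
  rwa [fromBlocks_multiply, ← fromBlocks_one, toBlocks_fromBlocks₁₂, toBlocks_fromBlocks₁₂,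
    Matrix.mul_neg, neg_add_eq_zero] at h₁₂

theorem fromBlocks_one_mul_fromBlocks_one_neg (Q : Matrix m p R) :
    fromBlocks (1 : Matrix m m R) Q 0 (1 : Matrix p p R) *
      fromBlocks (1 : Matrix m m R) (-Q) 0 (1 : Matrix p p R) = 1 := by
  simp [fromBlocks_multiply, ← fromBlocks_one]

theorem youla_fromBlocks_mul_fromBlocks_eq_one {M Y : Matrix m m R} {X Xt Q : Matrix m p R}
    {N Nt : Matrix p m R} {Mt Yt : Matrix p p R}
    (hBez : fromBlocks Y X (-Nt) Mt * fromBlocks M (-Xt) N Yt = 1) :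
    fromBlocks (Y - Q * Nt) (X + Q * Mt) (-Nt) Mt *
      fromBlocks M (-(Xt + M * Q)) N (Yt - N * Q) = 1 := by
  have hLeft : fromBlocks (Y - Q * Nt) (X + Q * Mt) (-Nt) Mt =
      fromBlocks 1 Q 0 1 * fromBlocks Y X (-Nt) Mt := by
    simp [fromBlocks_multiply, sub_eq_add_neg]
  have hRight : fromBlocks M (-(Xt + M * Q)) N (Yt - N * Q) =
      fromBlocks M (-Xt) N Yt * fromBlocks 1 (-Q) 0 1 := by
    simp [fromBlocks_multiply, sub_eq_add_neg, add_comm]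
  rw [hLeft, hRight, Matrix.mul_assoc, ← Matrix.mul_assoc (fromBlocks Y X (-Nt) Mt), hBez,
    one_mul, fromBlocks_one_mul_fromBlocks_one_neg]

end Matrix

/-- **Equality of the two coprime factorizations of the Youla-parameterized
controller (part of Theorem 1(b)).** -/
theorem youla_left_right_factorizations_agree {m p : ℕ}
    (M : Matrix (Fin m) (Fin m) (RatFunc ℝ)) (N : Matrix (Fin p) (Fin m) (RatFunc ℝ))
    (Mt : Matrix (Fin p) (Fin p) (RatFunc ℝ)) (Nt : Matrix (Fin p) (Fin m) (RatFunc ℝ))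
    (X : Matrix (Fin m) (Fin p) (RatFunc ℝ)) (Y : Matrix (Fin m) (Fin m) (RatFunc ℝ))
    (Xt : Matrix (Fin m) (Fin p) (RatFunc ℝ)) (Yt : Matrix (Fin p) (Fin p) (RatFunc ℝ))
    (hBez : Matrix.fromBlocks Y X (-Nt) Mt * Matrix.fromBlocks M (-Xt) N Yt = 1)
    (Q : Matrix (Fin m) (Fin p) (RatFunc ℝ))
    (XQ : Matrix (Fin m) (Fin p) (RatFunc ℝ)) (hXQ : XQ = X + Q * Mt)
    (YQ : Matrix (Fin m) (Fin m) (RatFunc ℝ)) (hYQ : YQ = Y - Q * Nt)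
    (XtQ : Matrix (Fin m) (Fin p) (RatFunc ℝ)) (hXtQ : XtQ = Xt + M * Q)
    (YtQ : Matrix (Fin p) (Fin p) (RatFunc ℝ)) (hYtQ : YtQ = Yt - N * Q)
    (hYQinv : IsUnit YQ) (hYtQinv : IsUnit YtQ) :
    YQ⁻¹ * XQ = XtQ * YtQ⁻¹ := by
  subst hXQ hYQ hXtQ hYtQ
  exact inv_mul_eq_mul_inv_of_mul_eq_mul hYQinv hYtQinv
    (mul_eq_mul_of_fromBlocks_mul_fromBlocks_eq_one (youla_fromBlocks_mul_fromBlocks_eq_one hBez))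
end
end

section
/- Affine closed-loop maps (Corollary 1): Let (M, N, M̃, Ñ, X, Y, X̃, Ỹ) be a DCF of the p×m matrix G over RatFunc ℝ, let Q be any m×p matrix over RatFunc ℝ with X_Q := X + Q·M̃, Y_Q := Y − Q·Ñ, X̃_Q := X̃ + M·Q, Ỹ_Q := Ỹ − N·Q, assume Y_Q and Ỹ_Q are invertible, and set K_Q := Y_Q⁻¹·X_Q. Then I_p + G·K_Q and I_m + K_Q·G are invertible, and the closed-loop maps are affine in Q: (I_p + G·K_Q)⁻¹·G·K_Q = N·X_Q, (I_p + G·K_Q)⁻¹·G = N·Y_Q, (I_p + G·K_Q)⁻¹ = I_p − N·X_Q, (I_m + K_Q·G)⁻¹·K_Q = M·X_Q, and (I_m + K_Q·G)⁻¹ = M·Y_Q. -/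
open Matrix

noncomputable section

/-- **Affine closed-loop maps (Corollary 1).**
For a DCF of `G` and a Youla parameter `Q` with `Y_Q` and `Ỹ_Q` invertible, the
sensitivity matrices are invertible and the closed-loop maps are affine in `Q`. -/
theorem affine_closed_loop_maps {m p : ℕ}
    (G : Matrix (Fin p) (Fin m) (RatFunc ℝ))
    (M : Matrix (Fin m) (Fin m) (RatFunc ℝ)) (N : Matrix (Fin p) (Fin m) (RatFunc ℝ))
    (Mt : Matrix (Fin p) (Fin p) (RatFunc ℝ)) (Nt : Matrix (Fin p) (Fin m) (RatFunc ℝ))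
    (X : Matrix (Fin m) (Fin p) (RatFunc ℝ)) (Y : Matrix (Fin m) (Fin m) (RatFunc ℝ))
    (Xt : Matrix (Fin m) (Fin p) (RatFunc ℝ)) (Yt : Matrix (Fin p) (Fin p) (RatFunc ℝ))
    (hMinv : IsUnit M) (hMtinv : IsUnit Mt)
    (hGr : G = N * M⁻¹) (hGl : G = Mt⁻¹ * Nt)
    (hBez : Matrix.fromBlocks Y X (-Nt) Mt * Matrix.fromBlocks M (-Xt) N Yt = 1)
    (Q : Matrix (Fin m) (Fin p) (RatFunc ℝ))
    (XQ : Matrix (Fin m) (Fin p) (RatFunc ℝ)) (hXQ : XQ = X + Q * Mt)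
    (YQ : Matrix (Fin m) (Fin m) (RatFunc ℝ)) (hYQ : YQ = Y - Q * Nt)
    (XtQ : Matrix (Fin m) (Fin p) (RatFunc ℝ)) (hXtQ : XtQ = Xt + M * Q)
    (YtQ : Matrix (Fin p) (Fin p) (RatFunc ℝ)) (hYtQ : YtQ = Yt - N * Q)
    (hYQinv : IsUnit YQ) (hYtQinv : IsUnit YtQ)
    (KQ : Matrix (Fin m) (Fin p) (RatFunc ℝ)) (hKQ : KQ = YQ⁻¹ * XQ) :
    IsUnit (1 + G * KQ) ∧ IsUnit (1 + KQ * G) ∧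
    (1 + G * KQ)⁻¹ * (G * KQ) = N * XQ ∧
    (1 + G * KQ)⁻¹ * G = N * YQ ∧
    (1 + G * KQ)⁻¹ = 1 - N * XQ ∧
    (1 + KQ * G)⁻¹ * KQ = M * XQ ∧
    (1 + KQ * G)⁻¹ = M * YQ := by
  have hMd : IsUnit M.det := (Matrix.isUnit_iff_isUnit_det M).mp hMinv
  have hMtd : IsUnit Mt.det := (Matrix.isUnit_iff_isUnit_det Mt).mp hMtinv
  have hYQd : IsUnit YQ.det := (Matrix.isUnit_iff_isUnit_det YQ).mp hYQinv
  have hBez' : Matrix.fromBlocks M (-Xt) N Yt * Matrix.fromBlocks Y X (-Nt) Mt = 1 :=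
    mul_eq_one_comm.mp hBez
  rw [Matrix.fromBlocks_multiply, ← Matrix.fromBlocks_one, Matrix.fromBlocks_inj] at hBez hBez'
  obtain ⟨b11, b12, b21, b22⟩ := hBez
  obtain ⟨r11, r12, r21, r22⟩ := hBez'
  -- basic rearrangements of the Bezout blocks
  have hc : Mt * N = Nt * M := by
    rw [Matrix.neg_mul, neg_add_eq_zero] at b21
    exact b21.symm
  have r11' : M * Y + Xt * Nt = 1 := by
    rw [Matrix.neg_mul, Matrix.mul_neg, neg_neg] at r11
    exact r11
  have r12' : M * X = Xt * Mt := by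
    rw [Matrix.neg_mul, add_neg_eq_zero] at r12
    exact r12
  have r21' : N * Y = Yt * Nt := by
    rw [Matrix.mul_neg, add_neg_eq_zero] at r21
    exact r21
  -- Q-shifted identities
  have e5 : M * YQ + XtQ * Nt = 1 := by
    rw [hYQ, hXtQ, Matrix.mul_sub, Matrix.add_mul, ← Matrix.mul_assoc, ← r11']
    abel
  have e6 : M * XQ = XtQ * Mt := by
    rw [hXQ, hXtQ, Matrix.mul_add, Matrix.add_mul, ← Matrix.mul_assoc, r12']
  have e7 : N * YQ = YtQ * Nt := by
    rw [hYQ, hYtQ, Matrix.mul_sub, Matrix.sub_mul, ← Matrix.mul_assoc, r21']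
  have e8 : N * XQ + YtQ * Mt = 1 := by
    rw [hXQ, hYtQ, Matrix.mul_add, Matrix.sub_mul, ← Matrix.mul_assoc, ← r22]
    abel
  -- coprime-factor identities for G
  have hMtG : Mt * G = Nt := by
    rw [hGl, ← Matrix.mul_assoc, Matrix.mul_nonsing_inv Mt hMtd, Matrix.one_mul]
  have hYK : YQ * KQ = XQ := by
    rw [hKQ, ← Matrix.mul_assoc, Matrix.mul_nonsing_inv YQ hYQd, Matrix.one_mul]
  -- left inverses of the sensitivity matrices
  have hS : (M * YQ) * (1 + KQ * G) = 1 := by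
    calc (M * YQ) * (1 + KQ * G) = M * YQ + M * YQ * KQ * G := by
          rw [Matrix.mul_add, Matrix.mul_one, ← Matrix.mul_assoc]
      _ = M * YQ + M * XQ * G := by rw [Matrix.mul_assoc M YQ KQ, hYK]
      _ = M * YQ + XtQ * Nt := by rw [e6, Matrix.mul_assoc, hMtG]
      _ = 1 := e5
  have hT : (YtQ * Mt) * (1 + G * KQ) = 1 := by
    calc (YtQ * Mt) * (1 + G * KQ) = YtQ * Mt + YtQ * Mt * G * KQ := by
          rw [Matrix.mul_add, Matrix.mul_one, ← Matrix.mul_assoc]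
      _ = YtQ * Mt + YtQ * Nt * KQ := by rw [Matrix.mul_assoc YtQ Mt G, hMtG]
      _ = YtQ * Mt + N * XQ := by rw [← e7, Matrix.mul_assoc, hYK]
      _ = 1 := by rw [add_comm]; exact e8
  have hSu : IsUnit (1 + KQ * G) :=
    ⟨⟨1 + KQ * G, M * YQ, mul_eq_one_comm.mp hS, hS⟩, rfl⟩
  have hTu : IsUnit (1 + G * KQ) :=
    ⟨⟨1 + G * KQ, YtQ * Mt, mul_eq_one_comm.mp hT, hT⟩, rfl⟩
  have hSinv : (1 + KQ * G)⁻¹ = M * YQ := Matrix.inv_eq_left_inv hS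
  have hTinv : (1 + G * KQ)⁻¹ = YtQ * Mt := Matrix.inv_eq_left_inv hT
  have hTG : (1 + G * KQ)⁻¹ * G = N * YQ := by
    rw [hTinv, Matrix.mul_assoc, hMtG, ← e7]
  refine ⟨hTu, hSu, ?_, hTG, ?_, ?_, hSinv⟩
  · rw [← Matrix.mul_assoc, hTG, Matrix.mul_assoc, hYK]
  · rw [hTinv]
    exact eq_sub_of_add_eq' e8
  · rw [hSinv, Matrix.mul_assoc, hYK]
end
end

section
/- NRF from a left factorization (Remark 2): Let K = R⁻¹·P where R is an invertible m×m matrix and P an m×p matrix over RatFunc ℝ, and suppose R^diag is invertible (equivalently, R i i ≠ 0 for every i). Define Φ := I_m − (R^diag)⁻¹·R and Γ := (R^diag)⁻¹·P. Then Φ has all diagonal entries equal to zero (Φ i i = 0 for every i), I_m − Φ is invertible, and (I_m − Φ)⁻¹·Γ = K; i.e., the pair (Φ, Γ) is a Network Realization Function of K. -/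
open Matrix

noncomputable section

/-- **NRF from a left factorization (Remark 2).**
From any left factorization `K = R⁻¹ P` with `R` and `R^diag` invertible, the
pair `(Φ, Γ) = (I − (R^diag)⁻¹ R, (R^diag)⁻¹ P)` is an NRF of `K`. -/
theorem nrf_from_left_factorization {m p : ℕ}
    (R : Matrix (Fin m) (Fin m) (RatFunc ℝ)) (P : Matrix (Fin m) (Fin p) (RatFunc ℝ))
    (K : Matrix (Fin m) (Fin p) (RatFunc ℝ))
    (hR : IsUnit R)
    (hRdiag : IsUnit (Matrix.diagonal fun i => R i i))
    (hK : K = R⁻¹ * P)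
    (Φ : Matrix (Fin m) (Fin m) (RatFunc ℝ))
    (hΦ : Φ = 1 - (Matrix.diagonal fun i => R i i)⁻¹ * R)
    (Γ : Matrix (Fin m) (Fin p) (RatFunc ℝ))
    (hΓ : Γ = (Matrix.diagonal fun i => R i i)⁻¹ * P) :
    (∀ i, Φ i i = 0) ∧ IsUnit (1 - Φ) ∧ (1 - Φ)⁻¹ * Γ = K := by
  set D : Matrix (Fin m) (Fin m) (RatFunc ℝ) := Matrix.diagonal fun i => R i i with hD
  have hdiag : ∀ i, R i i ≠ 0 := by
    intro i
    have := (Matrix.isUnit_diagonal.mp hRdiag).map (Pi.evalMonoidHom _ i)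
    exact this.ne_zero
  have hDinv : D⁻¹ = Matrix.diagonal fun i => (R i i)⁻¹ := by
    apply Matrix.inv_eq_right_inv
    rw [hD, Matrix.diagonal_mul_diagonal]
    simp [mul_inv_cancel₀, hdiag]
  have h1Φ : 1 - Φ = D⁻¹ * R := by rw [hΦ]; abel
  have hDu : IsUnit D⁻¹ := by
    rw [Matrix.isUnit_iff_isUnit_det]
    exact Matrix.isUnit_nonsing_inv_det _ (hRdiag.map (Matrix.detMonoidHom))
  constructor
  · intro i
    rw [hΦ, hDinv]
    simp [Matrix.sub_apply, Matrix.mul_apply, Matrix.diagonal_apply, Matrix.one_apply,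
      Finset.sum_eq_single i, inv_mul_cancel₀ (hdiag i)]
  refine ⟨h1Φ ▸ hDu.mul hR, ?_⟩
  rw [h1Φ, hΓ, Matrix.mul_inv_rev, Matrix.nonsing_inv_nonsing_inv _ (hRdiag.map Matrix.detMonoidHom), hK,
    Matrix.mul_assoc, ← Matrix.mul_assoc D, Matrix.mul_nonsing_inv _ (hRdiag.map Matrix.detMonoidHom), Matrix.one_mul]
end
end

section
/- Block inverse identity used in the proof of Theorem 2: Let M, N, M̃, Ñ, X, Y, X̃, Ỹ be matrices over RatFunc ℝ of sizes M (m×m), N (p×m), M̃ (p×p), Ñ (p×m), X (m×p), Y (m×m), X̃ (m×p), Ỹ (p×p) satisfying [[Y, X],[−Ñ, M̃]] · [[M, −X̃],[N, Ỹ]] = I_{m+p}, let Q be an m×p matrix over RatFunc ℝ with X_Q := X + Q·M̃, Y_Q := Y − Q·Ñ, X̃_Q := X̃ + M·Q, Ỹ_Q := Ỹ − N·Q, and assume Y_Q^diag is invertible. Then [[M̃, Ñ],[−(Y_Q^diag)⁻¹·X_Q, (Y_Q^diag)⁻¹·Y_Q]] · [[Ỹ_Q, −N·Y_Q^diag],[X̃_Q,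 M·Y_Q^diag]] = I_{p+m}. -/
/-!
Conjugating the Bezout identity by the unipotent block matrix `[[1, Q], [0, 1]]` gives the
`Q`-shifted identity `[[Y_Q, X_Q], [-Ñ, M̃]] * [[M, -X̃_Q], [N, Ỹ_Q]] = 1`. The claimed identity
is this one again, conjugated by the block rotation `[[0, 1], [-1, 0]]` (which swaps the roles of
the two block rows and columns) and then by `diag(1, D)` with `D = Y_Q^diag`.
-/

open Matrix

namespace Matrix

variable {l n R : Type*} [Fintype l] [Fintype n] [DecidableEq l] [DecidableEq n] [Ring R]

theorem fromBlocks_mul_fromBlocks_eq_one_addRow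
    {A : Matrix l l R} {B : Matrix l n R} {C : Matrix n l R} {D : Matrix n n R}
    {E : Matrix l l R} {F : Matrix l n R} {G : Matrix n l R} {H : Matrix n n R}
    (h : fromBlocks A B C D * fromBlocks E F G H = 1) (Q : Matrix l n R) :
    fromBlocks (A + Q * C) (B + Q * D) C D * fromBlocks E (F - E * Q) G (H - G * Q) = 1 := by
  have hU : fromBlocks 1 Q 0 1 * fromBlocks 1 (-Q) 0 1 = (1 : Matrix (l ⊕ n) (l ⊕ n) R) := by
    simp [fromBlocks_multiply, ← fromBlocks_one]
  have hLeft : fromBlocks (A + Q * C) (B + Q * D) C D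
      = fromBlocks 1 Q 0 1 * fromBlocks A B C D := by
    simp [fromBlocks_multiply]
  have hRight : fromBlocks E (F - E * Q) G (H - G * Q)
      = fromBlocks E F G H * fromBlocks 1 (-Q) 0 1 := by
    simp [fromBlocks_multiply, sub_eq_add_neg, add_comm]
  rw [hLeft, hRight, Matrix.mul_assoc, ← Matrix.mul_assoc (fromBlocks A B C D), h,
    Matrix.one_mul, hU]

theorem fromBlocks_mul_fromBlocks_eq_one_rotate
    {A : Matrix l l R} {B : Matrix l n R} {C : Matrix n l R} {D : Matrix n n R}
    {E : Matrix l l R} {F : Matrix l n R} {G : Matrix n l R} {H : Matrix n n R}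
    (h : fromBlocks A B C D * fromBlocks E F G H = 1) {S S' : Matrix l l R} (hS : S' * S = 1) :
    fromBlocks D (-C) (-(S' * B)) (S' * A) * fromBlocks H (-(G * S)) (-F) (E * S) = 1 := by
  rw [fromBlocks_multiply, ← fromBlocks_one, fromBlocks_inj] at h
  obtain ⟨h₁₁, h₁₂, h₂₁, h₂₂⟩ := h
  rw [fromBlocks_multiply, ← fromBlocks_one, fromBlocks_inj]
  refine ⟨?_, ?_, ?_, ?_⟩
  · simpa only [Matrix.neg_mul, Matrix.mul_neg, neg_neg, add_comm] using h₂₂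
  · rw [Matrix.mul_neg, Matrix.neg_mul, ← Matrix.mul_assoc, ← Matrix.mul_assoc, ← neg_add,
      ← Matrix.add_mul, add_comm, h₂₁, Matrix.zero_mul, neg_zero]
  · rw [Matrix.mul_neg, Matrix.neg_mul, Matrix.mul_assoc, Matrix.mul_assoc, ← neg_add,
      ← Matrix.mul_add, add_comm, h₁₂, Matrix.mul_zero, neg_zero]
  · rw [Matrix.neg_mul, Matrix.mul_neg, neg_neg, Matrix.mul_assoc, Matrix.mul_assoc,
      ← Matrix.mul_add, ← Matrix.mul_assoc B, ← Matrix.mul_assoc A, ← Matrix.add_mul, add_comm,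
      h₁₁, Matrix.one_mul, hS]

end Matrix

theorem block_inverse_identity_thm2_general {m p : ℕ}
    (M : Matrix (Fin m) (Fin m) (RatFunc ℝ)) (N : Matrix (Fin p) (Fin m) (RatFunc ℝ))
    (Mt : Matrix (Fin p) (Fin p) (RatFunc ℝ)) (Nt : Matrix (Fin p) (Fin m) (RatFunc ℝ))
    (X : Matrix (Fin m) (Fin p) (RatFunc ℝ)) (Y : Matrix (Fin m) (Fin m) (RatFunc ℝ))
    (Xt : Matrix (Fin m) (Fin p) (RatFunc ℝ)) (Yt : Matrix (Fin p) (Fin p) (RatFunc ℝ))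
    (hBez : Matrix.fromBlocks Y X (-Nt) Mt * Matrix.fromBlocks M (-Xt) N Yt = 1)
    (Q : Matrix (Fin m) (Fin p) (RatFunc ℝ))
    (XQ : Matrix (Fin m) (Fin p) (RatFunc ℝ)) (hXQ : XQ = X + Q * Mt)
    (YQ : Matrix (Fin m) (Fin m) (RatFunc ℝ)) (hYQ : YQ = Y - Q * Nt)
    (XtQ : Matrix (Fin m) (Fin p) (RatFunc ℝ)) (hXtQ : XtQ = Xt + M * Q)
    (YtQ : Matrix (Fin p) (Fin p) (RatFunc ℝ)) (hYtQ : YtQ = Yt - N * Q)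
    (Ydiag : Matrix (Fin m) (Fin m) (RatFunc ℝ))
    (hYdiagInv : IsUnit Ydiag) :
    Matrix.fromBlocks Mt Nt (-(Ydiag⁻¹ * XQ)) (Ydiag⁻¹ * YQ) *
      Matrix.fromBlocks YtQ (-(N * Ydiag)) XtQ (M * Ydiag) = 1 := by
  subst hXQ hYQ hXtQ hYtQ
  have hShift : fromBlocks (Y - Q * Nt) (X + Q * Mt) (-Nt) Mt *
      fromBlocks M (-(Xt + M * Q)) N (Yt - N * Q) = 1 := by
    convert fromBlocks_mul_fromBlocks_eq_one_addRow hBez Q using 3 <;>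
      simp only [Matrix.mul_neg, sub_eq_add_neg, neg_add]
  have hInv : Ydiag⁻¹ * Ydiag = 1 := nonsing_inv_mul _ ((isUnit_iff_isUnit_det _).mp hYdiagInv)
  simpa only [neg_neg] using fromBlocks_mul_fromBlocks_eq_one_rotate hShift hInv

/-- **Block inverse identity used in the proof of Theorem 2.** -/
theorem block_inverse_identity_thm2 {m p : ℕ}
    (M : Matrix (Fin m) (Fin m) (RatFunc ℝ)) (N : Matrix (Fin p) (Fin m) (RatFunc ℝ))
    (Mt : Matrix (Fin p) (Fin p) (RatFunc ℝ)) (Nt : Matrix (Fin p) (Fin m) (RatFunc ℝ))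
    (X : Matrix (Fin m) (Fin p) (RatFunc ℝ)) (Y : Matrix (Fin m) (Fin m) (RatFunc ℝ))
    (Xt : Matrix (Fin m) (Fin p) (RatFunc ℝ)) (Yt : Matrix (Fin p) (Fin p) (RatFunc ℝ))
    (hBez : Matrix.fromBlocks Y X (-Nt) Mt * Matrix.fromBlocks M (-Xt) N Yt = 1)
    (Q : Matrix (Fin m) (Fin p) (RatFunc ℝ))
    (XQ : Matrix (Fin m) (Fin p) (RatFunc ℝ)) (hXQ : XQ = X + Q * Mt)
    (YQ : Matrix (Fin m) (Fin m) (RatFunc ℝ)) (hYQ : YQ = Y - Q * Nt)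
    (XtQ : Matrix (Fin m) (Fin p) (RatFunc ℝ)) (hXtQ : XtQ = Xt + M * Q)
    (YtQ : Matrix (Fin p) (Fin p) (RatFunc ℝ)) (hYtQ : YtQ = Yt - N * Q)
    (Ydiag : Matrix (Fin m) (Fin m) (RatFunc ℝ))
    (hYdiag : Ydiag = Matrix.diagonal fun i => YQ i i)
    (hYdiagInv : IsUnit Ydiag) :
    Matrix.fromBlocks Mt Nt (-(Ydiag⁻¹ * XQ)) (Ydiag⁻¹ * YQ) *
      Matrix.fromBlocks YtQ (-(N * Ydiag)) XtQ (M * Ydiag) = 1 :=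
  block_inverse_identity_thm2_general M N Mt Nt X Y Xt Yt hBez Q XQ hXQ YQ hYQ XtQ hXtQ YtQ hYtQ
    Ydiag hYdiagInv
end

section
/- Internal stability of the NRF implementation (Theorem 2(a)): Let (M, N, M̃, Ñ, X, Y, X̃, Ỹ) be a DCF of the p×m matrix G over RatFunc ℝ in which all eight matrices are stable, let Q be an m×p stable matrix with X_Q := X + Q·M̃, Y_Q := Y − Q·Ñ, X̃_Q := X̃ + M·Q, Ỹ_Q := Ỹ − N·Q, assume Y_Q^diag is invertible, and define Φ := I_m − (Y_Q^diag)⁻¹·Y_Q and Γ := (Y_Q^diag)⁻¹·X_Q. Suppose the vectors z, y, r, ν ∈ (RatFunc ℝ)^p and u, v, w, δ_u ∈ (RatFunc ℝ)^m satisfy the feedback equations z = r − y, v = u + w, y = G·v + ν, and u = Φ·(u + δ_u) + Γ·z. Then z = −Ỹ_Q·Ñ·w + Ỹ_Q·M̃·r − Ỹ_Q·M̃·ν + N·(Y_Q − Y_Q^diag)·δ_u and u = −X̃_Q·Ñ·w + X̃_Q·M̃·r − X̃_Q·M̃·ν − M·(Y_Q − Y_Q^diag)·δ_u; moreover, each of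 the coefficient matrices Ỹ_Q·Ñ, Ỹ_Q·M̃, N·(Y_Q − Y_Q^diag), X̃_Q·Ñ, X̃_Q·M̃, M·(Y_Q − Y_Q^diag), I_m − X̃_Q·Ñ, and I_p − Ỹ_Q·M̃ is stable. -/
/-!
Replacing `(X, Y, X̃, Ỹ)` by their `Q`-modifications keeps the Bézout identity: the two block
factors get multiplied by `[[1, Q], [0, 1]]` on the left and `[[1, -Q], [0, 1]]` on the right,
and these cancel. Multiplying the NRF equation by `Y_Q^diag` and the plant equation by `M̃` turns
the loop into the block system
`[[Y_Q, X_Q], [-Ñ, M̃]] (u, -z) = ((Y_Q^diag - Y_Q) δ_u, Ñ w + M̃ ν - M̃ r)`,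
which the inverse `[[M, -X̃_Q], [N, Ỹ_Q]]` solves. Stable rational functions form a subring, so
all closed-loop maps are stable; for the last two, `I - X̃_Q Ñ = M Y_Q` and `I - Ỹ_Q M̃ = N X_Q`
by the Bézout identity with the factors swapped.
-/

open Matrix Polynomial

noncomputable section

/-- A rational function is stable if every complex root of the image in `ℂ[X]`
of its reduced denominator has negative real part. -/
def RFStable (f : RatFunc ℝ) : Prop :=
  ∀ z : ℂ, aeval z f.denom = 0 → z.re < 0

/-- A matrix over `RatFunc ℝ` is stable if all of its entries are stable. -/
def MatStable {a b : Type*} (G : Matrix a b (RatFunc ℝ)) : Prop :=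
  ∀ i j, RFStable (G i j)

lemma RFStable.of_denom_dvd_mul {f g h : RatFunc ℝ} (hg : RFStable g) (hh : RFStable h)
    (hd : f.denom ∣ g.denom * h.denom) : RFStable f := by
  intro z hz
  obtain ⟨c, hc⟩ := hd
  have hgh : aeval z g.denom * aeval z h.denom = 0 := by
    rw [← _root_.map_mul, hc, _root_.map_mul, hz, zero_mul]
  rcases mul_eq_zero.mp hgh with hg' | hh'
  · exact hg z hg'
  · exact hh z hh'

lemma RFStable.of_denom_dvd {f g : RatFunc ℝ} (hg : RFStable g) (hd : f.denom ∣ g.denom) :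
    RFStable f :=
  hg.of_denom_dvd_mul hg (hd.mul_right _)

def stableSubring : Subring (RatFunc ℝ) where
  carrier := {f | RFStable f}
  zero_mem' z hz := by simp at hz
  one_mem' z hz := by simp at hz
  add_mem' hf hg := RFStable.of_denom_dvd_mul hf hg (RatFunc.denom_add_dvd _ _)
  mul_mem' hf hg := RFStable.of_denom_dvd_mul hf hg (RatFunc.denom_mul_dvd _ _)
  neg_mem' {f} hf := by
    refine RFStable.of_denom_dvd hf ?_
    have hneg : -f =
        algebraMap ℝ[X] (RatFunc ℝ) (-f.num) / algebraMap ℝ[X] (RatFunc ℝ) f.denom := by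
      rw [map_neg, neg_div, RatFunc.num_div_denom]
    rw [hneg]
    exact RatFunc.denom_div_dvd _ _

namespace MatStable

variable {a b c : Type*}

lemma add {A B : Matrix a b (RatFunc ℝ)} (hA : MatStable A) (hB : MatStable B) :
    MatStable (A + B) :=
  fun i j => stableSubring.add_mem (hA i j) (hB i j)

lemma sub {A B : Matrix a b (RatFunc ℝ)} (hA : MatStable A) (hB : MatStable B) :
    MatStable (A - B) :=
  fun i j => stableSubring.sub_mem (hA i j) (hB i j)

lemma mul [Fintype b] {A : Matrix a b (RatFunc ℝ)} {B : Matrix b c (RatFunc ℝ)}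
    (hA : MatStable A) (hB : MatStable B) : MatStable (A * B) :=
  fun i j => stableSubring.sum_mem fun k _ => stableSubring.mul_mem (hA i k) (hB k j)

lemma diagonal_diag [DecidableEq a] {A : Matrix a a (RatFunc ℝ)} (hA : MatStable A) :
    MatStable (Matrix.diagonal fun i => A i i) := by
  intro i j
  by_cases h : i = j
  · subst h
    simpa using hA i i
  · rw [diagonal_apply_ne _ h]
    exact stableSubring.zero_mem

end MatStable

section BlockAlgebra

variable {R : Type*} {l m n o : Type*}

theorem Matrix.solve_fromBlocks_of_mul_eq_one [Semiring R] [Fintype l] [Fintype m]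
    [Fintype n] [Fintype o] [DecidableEq n] [DecidableEq o] {A : Matrix l n R}
    {B : Matrix l o R} {C : Matrix m n R} {D : Matrix m o R} {A' : Matrix n l R}
    {B' : Matrix n m R} {C' : Matrix o l R} {D' : Matrix o m R}
    (h : fromBlocks A' B' C' D' * fromBlocks A B C D = 1) {x : n → R} {y : o → R}
    {a : l → R} {b : m → R} (ha : A *ᵥ x + B *ᵥ y = a) (hb : C *ᵥ x + D *ᵥ y = b) :
    x = A' *ᵥ a + B' *ᵥ b ∧ y = C' *ᵥ a + D' *ᵥ b := by
  have hsys : fromBlocks A B C D *ᵥ Sum.elim x y = Sum.elim a b := by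
    rw [fromBlocks_mulVec, Sum.elim_comp_inl, Sum.elim_comp_inr, ha, hb]
  have hxy : Sum.elim x y = Sum.elim (A' *ᵥ a + B' *ᵥ b) (C' *ᵥ a + D' *ᵥ b) := by
    rw [← one_mulVec (Sum.elim x y), ← h, ← mulVec_mulVec, hsys, fromBlocks_mulVec,
      Sum.elim_comp_inl, Sum.elim_comp_inr]
  exact ⟨congrArg (· ∘ Sum.inl) hxy, congrArg (· ∘ Sum.inr) hxy⟩

theorem Matrix.fromBlocks_mul_eq_one_diag [Semiring R] [Fintype n] [Fintype o]
    [DecidableEq l] [DecidableEq m] {A : Matrix l n R} {B : Matrix l o R}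
    {C : Matrix m n R} {D : Matrix m o R} {A' : Matrix n l R} {B' : Matrix n m R}
    {C' : Matrix o l R} {D' : Matrix o m R}
    (h : fromBlocks A B C D * fromBlocks A' B' C' D' = 1) :
    A * A' + B * C' = 1 ∧ C * B' + D * D' = 1 := by
  rw [fromBlocks_multiply, ← fromBlocks_one, fromBlocks_inj] at h
  exact ⟨h.1, h.2.2.2⟩

theorem Matrix.fromBlocks_youla_mul_eq_one [Ring R] [Fintype m] [Fintype n]
    [DecidableEq m] [DecidableEq n] {M Y : Matrix m m R}
    {Mt Yt : Matrix n n R} {N Nt : Matrix n m R} {X Xt : Matrix m n R}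
    (h : fromBlocks Y X (-Nt) Mt * fromBlocks M (-Xt) N Yt = 1) (Q : Matrix m n R) :
    fromBlocks (Y - Q * Nt) (X + Q * Mt) (-Nt) Mt *
      fromBlocks M (-(Xt + M * Q)) N (Yt - N * Q) = 1 := by
  have hL : fromBlocks (Y - Q * Nt) (X + Q * Mt) (-Nt) Mt =
      fromBlocks 1 Q 0 1 * fromBlocks Y X (-Nt) Mt := by
    rw [fromBlocks_multiply]
    simp only [Matrix.one_mul, Matrix.zero_mul, zero_add, Matrix.mul_neg, zero_sub,
      ← sub_eq_add_neg]
  have hR : fromBlocks M (-(Xt + M * Q)) N (Yt - N * Q) =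
      fromBlocks M (-Xt) N Yt * fromBlocks 1 (-Q) 0 1 := by
    rw [fromBlocks_multiply]
    simp only [Matrix.mul_one, Matrix.mul_zero, add_zero, Matrix.mul_neg]
    congr 1 <;> abel
  rw [hL, hR, Matrix.mul_assoc, ← Matrix.mul_assoc (fromBlocks Y X _ _), h, Matrix.one_mul,
    fromBlocks_multiply]
  simp

theorem Matrix.mulVec_sub_mulVec_eq_of_eq_nrf [CommRing R] [Fintype m] [Fintype n]
    [DecidableEq m] {D Y : Matrix m m R} {X : Matrix m n R} (hD : IsUnit D)
    {u δ : m → R} {z : n → R}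
    (hu : u = (1 - D⁻¹ * Y) *ᵥ (u + δ) + (D⁻¹ * X) *ᵥ z) :
    Y *ᵥ u - X *ᵥ z = (D - Y) *ᵥ δ := by
  have hdet := (isUnit_iff_isUnit_det D).mp hD
  have hDu : D *ᵥ u = (D - Y) *ᵥ (u + δ) + X *ᵥ z := by
    conv_lhs => rw [hu]
    rw [mulVec_add, mulVec_mulVec, mulVec_mulVec, Matrix.mul_sub, Matrix.mul_one,
      Matrix.mul_nonsing_inv_cancel_left D _ hdet, Matrix.mul_nonsing_inv_cancel_left D _ hdet]
  rw [mulVec_add, sub_mulVec, sub_mulVec] at hDu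
  rw [sub_mulVec]
  linear_combination hDu

end BlockAlgebra

theorem nrf_implementation_internal_stability_general {m p : ℕ}
    (G : Matrix (Fin p) (Fin m) (RatFunc ℝ))
    (M : Matrix (Fin m) (Fin m) (RatFunc ℝ)) (N : Matrix (Fin p) (Fin m) (RatFunc ℝ))
    (Mt : Matrix (Fin p) (Fin p) (RatFunc ℝ)) (Nt : Matrix (Fin p) (Fin m) (RatFunc ℝ))
    (X : Matrix (Fin m) (Fin p) (RatFunc ℝ)) (Y : Matrix (Fin m) (Fin m) (RatFunc ℝ))
    (Xt : Matrix (Fin m) (Fin p) (RatFunc ℝ)) (Yt : Matrix (Fin p) (Fin p) (RatFunc ℝ))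
    (hMtinv : IsUnit Mt)
    (hGl : G = Mt⁻¹ * Nt)
    (hBez : Matrix.fromBlocks Y X (-Nt) Mt * Matrix.fromBlocks M (-Xt) N Yt = 1)
    (hsM : MatStable M) (hsN : MatStable N) (hsMt : MatStable Mt) (hsNt : MatStable Nt)
    (hsX : MatStable X) (hsY : MatStable Y) (hsXt : MatStable Xt) (hsYt : MatStable Yt)
    (Q : Matrix (Fin m) (Fin p) (RatFunc ℝ)) (hsQ : MatStable Q)
    (XQ : Matrix (Fin m) (Fin p) (RatFunc ℝ)) (hXQ : XQ = X + Q * Mt)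
    (YQ : Matrix (Fin m) (Fin m) (RatFunc ℝ)) (hYQ : YQ = Y - Q * Nt)
    (XtQ : Matrix (Fin m) (Fin p) (RatFunc ℝ)) (hXtQ : XtQ = Xt + M * Q)
    (YtQ : Matrix (Fin p) (Fin p) (RatFunc ℝ)) (hYtQ : YtQ = Yt - N * Q)
    (Ydiag : Matrix (Fin m) (Fin m) (RatFunc ℝ))
    (hYdiag : Ydiag = Matrix.diagonal fun i => YQ i i)
    (hYdiagInv : IsUnit Ydiag)
    (Φ : Matrix (Fin m) (Fin m) (RatFunc ℝ)) (hΦ : Φ = 1 - Ydiag⁻¹ * YQ)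
    (Γ : Matrix (Fin m) (Fin p) (RatFunc ℝ)) (hΓ : Γ = Ydiag⁻¹ * XQ)
    (z y r ν : Fin p → RatFunc ℝ) (u v w δu : Fin m → RatFunc ℝ)
    (hz : z = r - y) (hv : v = u + w)
    (hy : y = G.mulVec v + ν)
    (hu : u = Φ.mulVec (u + δu) + Γ.mulVec z) :
    z = -((YtQ * Nt).mulVec w) + (YtQ * Mt).mulVec r - (YtQ * Mt).mulVec ν
        + (N * (YQ - Ydiag)).mulVec δu ∧
    u = -((XtQ * Nt).mulVec w) + (XtQ * Mt).mulVec r - (XtQ * Mt).mulVec ν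
        - (M * (YQ - Ydiag)).mulVec δu ∧
    MatStable (YtQ * Nt) ∧ MatStable (YtQ * Mt) ∧ MatStable (N * (YQ - Ydiag)) ∧
    MatStable (XtQ * Nt) ∧ MatStable (XtQ * Mt) ∧ MatStable (M * (YQ - Ydiag)) ∧
    MatStable ((1 : Matrix (Fin m) (Fin m) (RatFunc ℝ)) - XtQ * Nt) ∧
    MatStable ((1 : Matrix (Fin p) (Fin p) (RatFunc ℝ)) - YtQ * Mt) := by
  subst hΦ hΓ
  have hMtG : Mt * G = Nt := by
    rw [hGl, Matrix.mul_nonsing_inv_cancel_left Mt _ ((isUnit_iff_isUnit_det Mt).mp hMtinv)]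
  have hBezQ := fromBlocks_youla_mul_eq_one hBez Q
  rw [← hXQ, ← hYQ, ← hXtQ, ← hYtQ] at hBezQ
  have hBezQ' := mul_eq_one_comm.mp hBezQ
  have hcontroller : YQ *ᵥ u + XQ *ᵥ (-z) = (Ydiag - YQ) *ᵥ δu := by
    rw [mulVec_neg, ← sub_eq_add_neg]
    exact mulVec_sub_mulVec_eq_of_eq_nrf hYdiagInv hu
  have hplant : -Nt *ᵥ u + Mt *ᵥ (-z) = Nt *ᵥ w + Mt *ᵥ ν - Mt *ᵥ r := by
    subst hz hy hv
    simp only [mulVec_neg, mulVec_sub, mulVec_add, mulVec_mulVec, hMtG, neg_mulVec]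
    abel
  obtain ⟨hu', hz'⟩ := solve_fromBlocks_of_mul_eq_one hBezQ' hcontroller hplant
  obtain ⟨hMYQ, hNXQ⟩ := fromBlocks_mul_eq_one_diag hBezQ'
  rw [Matrix.neg_mul, Matrix.mul_neg, neg_neg] at hMYQ
  have hsYQ : MatStable YQ := hYQ ▸ hsY.sub (hsQ.mul hsNt)
  have hsXQ : MatStable XQ := hXQ ▸ hsX.add (hsQ.mul hsMt)
  have hsXtQ : MatStable XtQ := hXtQ ▸ hsXt.add (hsM.mul hsQ)
  have hsYtQ : MatStable YtQ := hYtQ ▸ hsYt.sub (hsN.mul hsQ)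
  have hsYQD : MatStable (YQ - Ydiag) := hsYQ.sub (hYdiag ▸ hsYQ.diagonal_diag)
  refine ⟨?_, ?_, hsYtQ.mul hsNt, hsYtQ.mul hsMt, hsN.mul hsYQD, hsXtQ.mul hsNt,
    hsXtQ.mul hsMt, hsM.mul hsYQD, ?_, ?_⟩
  · rw [← neg_neg z, hz']
    simp only [mulVec_add, mulVec_sub, mulVec_mulVec, Matrix.mul_sub, sub_mulVec]
    abel
  · rw [hu']
    simp only [mulVec_add, mulVec_sub, mulVec_mulVec, Matrix.mul_sub, sub_mulVec,
      Matrix.neg_mul, neg_mulVec]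
    abel
  · rw [← eq_sub_of_add_eq hMYQ]
    exact hsM.mul hsYQ
  · rw [← eq_sub_of_add_eq hNXQ]
    exact hsN.mul hsXQ

/-- **Internal stability of the NRF implementation (Theorem 2(a)).**
In the feedback loop with NRF implementation `u = Φ (u + δ_u) + Γ z`, the
signals `z` and `u` are given by stable closed-loop maps of `w, r, ν, δ_u`. -/
theorem nrf_implementation_internal_stability {m p : ℕ}
    (G : Matrix (Fin p) (Fin m) (RatFunc ℝ))
    (M : Matrix (Fin m) (Fin m) (RatFunc ℝ)) (N : Matrix (Fin p) (Fin m) (RatFunc ℝ))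
    (Mt : Matrix (Fin p) (Fin p) (RatFunc ℝ)) (Nt : Matrix (Fin p) (Fin m) (RatFunc ℝ))
    (X : Matrix (Fin m) (Fin p) (RatFunc ℝ)) (Y : Matrix (Fin m) (Fin m) (RatFunc ℝ))
    (Xt : Matrix (Fin m) (Fin p) (RatFunc ℝ)) (Yt : Matrix (Fin p) (Fin p) (RatFunc ℝ))
    (hMinv : IsUnit M) (hMtinv : IsUnit Mt)
    (hGr : G = N * M⁻¹) (hGl : G = Mt⁻¹ * Nt)
    (hBez : Matrix.fromBlocks Y X (-Nt) Mt * Matrix.fromBlocks M (-Xt) N Yt = 1)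
    (hsM : MatStable M) (hsN : MatStable N) (hsMt : MatStable Mt) (hsNt : MatStable Nt)
    (hsX : MatStable X) (hsY : MatStable Y) (hsXt : MatStable Xt) (hsYt : MatStable Yt)
    (Q : Matrix (Fin m) (Fin p) (RatFunc ℝ)) (hsQ : MatStable Q)
    (XQ : Matrix (Fin m) (Fin p) (RatFunc ℝ)) (hXQ : XQ = X + Q * Mt)
    (YQ : Matrix (Fin m) (Fin m) (RatFunc ℝ)) (hYQ : YQ = Y - Q * Nt)
    (XtQ : Matrix (Fin m) (Fin p) (RatFunc ℝ)) (hXtQ : XtQ = Xt + M * Q)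
    (YtQ : Matrix (Fin p) (Fin p) (RatFunc ℝ)) (hYtQ : YtQ = Yt - N * Q)
    (Ydiag : Matrix (Fin m) (Fin m) (RatFunc ℝ))
    (hYdiag : Ydiag = Matrix.diagonal fun i => YQ i i)
    (hYdiagInv : IsUnit Ydiag)
    (Φ : Matrix (Fin m) (Fin m) (RatFunc ℝ)) (hΦ : Φ = 1 - Ydiag⁻¹ * YQ)
    (Γ : Matrix (Fin m) (Fin p) (RatFunc ℝ)) (hΓ : Γ = Ydiag⁻¹ * XQ)
    (z y r ν : Fin p → RatFunc ℝ) (u v w δu : Fin m → RatFunc ℝ)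
    (hz : z = r - y) (hv : v = u + w)
    (hy : y = G.mulVec v + ν)
    (hu : u = Φ.mulVec (u + δu) + Γ.mulVec z) :
    z = -((YtQ * Nt).mulVec w) + (YtQ * Mt).mulVec r - (YtQ * Mt).mulVec ν
        + (N * (YQ - Ydiag)).mulVec δu ∧
    u = -((XtQ * Nt).mulVec w) + (XtQ * Mt).mulVec r - (XtQ * Mt).mulVec ν
        - (M * (YQ - Ydiag)).mulVec δu ∧
    MatStable (YtQ * Nt) ∧ MatStable (YtQ * Mt) ∧ MatStable (N * (YQ - Ydiag)) ∧
    MatStable (XtQ * Nt) ∧ MatStable (XtQ * Mt) ∧ MatStable (M * (YQ - Ydiag)) ∧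
    MatStable ((1 : Matrix (Fin m) (Fin m) (RatFunc ℝ)) - XtQ * Nt) ∧
    MatStable ((1 : Matrix (Fin p) (Fin p) (RatFunc ℝ)) - YtQ * Mt) :=
  nrf_implementation_internal_stability_general G M N Mt Nt X Y Xt Yt hMtinv hGl hBez hsM hsN hsMt
    hsNt hsX hsY hsXt hsYt Q hsQ XQ hXQ YQ hYQ XtQ hXtQ YtQ hYtQ Ydiag hYdiag hYdiagInv Φ hΦ Γ hΓ z
    y r ν u v w δu hz hv hy hu
end
end

section
/- Scalar unstable-pole conservation: Let f, g ∈ RatFunc ℝ with g ≠ 0. Suppose every complex root of the image of g.denom in ℂ[X] has negative real part (g is stable) and every complex root of the image of g.num in ℂ[X] has negative real part (g has no unstable zeros). Then for every z ∈ ℂ with Re z ≥ 0: z is a root of the image of (f·g).denom in ℂ[X] if and only if z is a root of the image of f.denom in ℂ[X]. -/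
open Polynomial

noncomputable section

/-- **Scalar unstable-pole conservation.**
If `g` is stable and has no unstable zeros, then `f * g` has exactly the same
unstable poles as `f`. -/
theorem scalar_unstable_pole_conservation (f g : RatFunc ℝ) (hg : g ≠ 0)
    (hg_stable : ∀ z : ℂ, aeval z g.denom = 0 → z.re < 0)
    (hg_minphase : ∀ z : ℂ, aeval z g.num = 0 → z.re < 0) :
    ∀ z : ℂ, 0 ≤ z.re → (aeval z (f * g).denom = 0 ↔ aeval z f.denom = 0) := by
  intro z hz
  have hdvd2 : f.denom ∣ (f * g).denom * g.num := by
    rw [RatFunc.denom_dvd (mul_ne_zero ((f * g).denom_ne_zero) (RatFunc.num_ne_zero hg))]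
    refine ⟨(f * g).num * g.denom, ?_⟩
    rw [RingHom.map_mul, RingHom.map_mul, ← div_mul_div_comm, RatFunc.num_div_denom]
    have : (algebraMap ℝ[X] (RatFunc ℝ)) g.denom / (algebraMap ℝ[X] (RatFunc ℝ)) g.num
        = g⁻¹ := by
      conv_rhs => rw [← RatFunc.num_div_denom g]
      rw [inv_div]
    rw [this, mul_inv_cancel_right₀ hg]
  constructor
  · intro h
    have hd : aeval z (f * g).denom ∣ aeval z (f.denom * g.denom) :=
      map_dvd _ (RatFunc.denom_mul_dvd f g)
    rw [h] at hd
    have h0 : aeval z (f.denom * g.denom) = 0 := zero_dvd_iff.mp hd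
    rw [map_mul] at h0
    rcases mul_eq_zero.mp h0 with h1 | h1
    · exact h1
    · exact absurd hz (not_le.mpr (hg_stable z h1))
  · intro h
    have hd : aeval z f.denom ∣ aeval z ((f * g).denom * g.num) := map_dvd _ hdvd2
    rw [h] at hd
    have h0 : aeval z ((f * g).denom * g.num) = 0 := zero_dvd_iff.mp hd
    rw [map_mul] at h0
    rcases mul_eq_zero.mp h0 with h1 | h1
    · exact h1
    · exact absurd hz (not_le.mpr (hg_minphase z h1))
end
end

section
/- Pole conservation under multiplication by a stable full-row-rank factor (Lemma 1, set version): Let G₁ be a q×p matrix and G₂ a p×m matrix over RatFunc ℝ, with every entry of G₁ and of G₂ proper. Suppose every entry of G₂ is stable, and for every z ∈ ℂ with Re z ≥ 0 the complex matrix G₂(z), obtained by entrywise evaluation (well-defined since no entry's denominator vanishes at z), has rank p (full row rank). Then the unstable pole set of the product G₁·G₂ equals the unstable pole set of G₁: for every z ∈ ℂ with Re z ≥ 0, some entry of G₁·G₂ has z as a root of its reduced denominator if and only if some entry of G₁ does. -/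
open Matrix Polynomial

noncomputable section

/-- A rational function is proper if the degree of its numerator is at most the
degree of its denominator. -/
def RFProper (f : RatFunc ℝ) : Prop :=
  f.num.degree ≤ f.denom.degree

namespace PoleAux

/-- Regularity of a real rational function at a complex point. -/
def Reg (z : ℂ) (f : RatFunc ℝ) : Prop :=
  Polynomial.eval₂ (algebraMap ℝ ℂ) z f.denom ≠ 0

lemma reg_iff (z : ℂ) (f : RatFunc ℝ) : Reg z f ↔ aeval z f.denom ≠ 0 := by
  rw [Reg, aeval_def]

lemma reg_of_denom_dvd {z : ℂ} {f : RatFunc ℝ} {Q : ℝ[X]}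
    (h : f.denom ∣ Q) (hQ : Polynomial.eval₂ (algebraMap ℝ ℂ) z Q ≠ 0) : Reg z f :=
  fun h0 => hQ (Polynomial.eval₂_eq_zero_of_dvd_of_eval₂_eq_zero _ _ h h0)

lemma reg_add {z : ℂ} {f g : RatFunc ℝ} (hf : Reg z f) (hg : Reg z g) :
    Reg z (f + g) :=
  reg_of_denom_dvd (RatFunc.denom_add_dvd f g)
    (by rw [Polynomial.eval₂_mul]; exact mul_ne_zero hf hg)

lemma reg_mul {z : ℂ} {f g : RatFunc ℝ} (hf : Reg z f) (hg : Reg z g) :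
    Reg z (f * g) :=
  reg_of_denom_dvd (RatFunc.denom_mul_dvd f g)
    (by rw [Polynomial.eval₂_mul]; exact mul_ne_zero hf hg)

lemma reg_algebraMap (z : ℂ) (P : ℝ[X]) : Reg z (algebraMap ℝ[X] (RatFunc ℝ) P) := by
  unfold Reg
  rw [RatFunc.denom_algebraMap, Polynomial.eval₂_one]
  exact one_ne_zero

/-- Evaluation of a rational function at `z`. -/
def ev (z : ℂ) : RatFunc ℝ → ℂ := RatFunc.eval (algebraMap ℝ ℂ) z

lemma ev_mul {z : ℂ} {f g : RatFunc ℝ} (hf : Reg z f) (hg : Reg z g) :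
    ev z (f * g) = ev z f * ev z g := by
  unfold Reg at hf hg
  unfold ev
  exact RatFunc.eval_mul (f := algebraMap ℝ ℂ) (a := z) hf hg

lemma ev_add {z : ℂ} {f g : RatFunc ℝ} (hf : Reg z f) (hg : Reg z g) :
    ev z (f + g) = ev z f + ev z g := by
  unfold Reg at hf hg
  unfold ev
  exact RatFunc.eval_add (f := algebraMap ℝ ℂ) (a := z) hf hg

lemma reg_sum {z : ℂ} {ι : Type*} (s : Finset ι) (F : ι → RatFunc ℝ)
    (h : ∀ k ∈ s, Reg z (F k)) :
    Reg z (∑ k ∈ s, F k) ∧ ev z (∑ k ∈ s, F k) = ∑ k ∈ s, ev z (F k) := by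
  classical
  induction s using Finset.cons_induction with
  | empty =>
      constructor
      · unfold Reg
        rw [Finset.sum_empty, RatFunc.denom_zero, Polynomial.eval₂_one]
        exact one_ne_zero
      · simp [ev]
  | cons a s ha ih =>
      have h' : ∀ k ∈ s, Reg z (F k) := fun k hk => h k (Finset.mem_cons_of_mem hk)
      obtain ⟨hs, hev⟩ := ih h'
      have hFa : Reg z (F a) := h a (Finset.mem_cons_self a s)
      rw [Finset.sum_cons, Finset.sum_cons]
      refine ⟨reg_add hFa hs, ?_⟩
      rw [ev_add hFa hs, hev]

lemma ev_eq (z : ℂ) (f : RatFunc ℝ) :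
    ev z f = aeval z f.num / aeval z f.denom := by
  rw [ev, RatFunc.eval, aeval_def, aeval_def]

/-- If `f = P / Q` (as a quotient in `RatFunc ℝ`) with `Q ≠ 0` regular at `z`,
then `f` is regular at `z`. -/
lemma reg_of_eq_div {z : ℂ} {f : RatFunc ℝ} {P Q : ℝ[X]} (hQ : Q ≠ 0)
    (hfe : f = algebraMap ℝ[X] (RatFunc ℝ) P / algebraMap ℝ[X] (RatFunc ℝ) Q)
    (hQz : Polynomial.eval₂ (algebraMap ℝ ℂ) z Q ≠ 0) : Reg z f := by
  refine reg_of_denom_dvd ?_ hQz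
  exact (RatFunc.denom_dvd hQ).mpr ⟨P, hfe⟩

end PoleAux

open PoleAux

/-- **Pole conservation under multiplication by a stable full-row-rank factor
(Lemma 1, set version).** -/
theorem unstable_pole_conservation {q p m : ℕ}
    (G₁ : Matrix (Fin q) (Fin p) (RatFunc ℝ)) (G₂ : Matrix (Fin p) (Fin m) (RatFunc ℝ))
    (hG₁prop : ∀ i j, RFProper (G₁ i j)) (hG₂prop : ∀ i j, RFProper (G₂ i j))
    (hG₂stab : ∀ i j, RFStable (G₂ i j))
    (hG₂rank : ∀ z : ℂ, 0 ≤ z.re →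
      (Matrix.of fun i j => aeval z (G₂ i j).num / aeval z (G₂ i j).denom :
        Matrix (Fin p) (Fin m) ℂ).rank = p) :
    ∀ z : ℂ, 0 ≤ z.re →
      ((∃ i j, aeval z ((G₁ * G₂) i j).denom = 0) ↔
       (∃ i j, aeval z ((G₁ i j).denom) = 0)) := by
  intro z hz
  classical
  -- every entry of G₂ is regular at z
  have hreg2 : ∀ k j, Reg z (G₂ k j) := by
    intro k j
    rw [reg_iff]
    intro h0
    exact absurd (hG₂stab k j z h0) (not_lt.mpr hz)
  constructor
  · -- forward: contrapositive
    rintro ⟨i, j, hij⟩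
    by_contra hno
    push_neg at hno
    have hreg1 : ∀ i k, Reg z (G₁ i k) := by
      intro i k; rw [reg_iff]; exact hno i k
    have : Reg z ((G₁ * G₂) i j) := by
      rw [Matrix.mul_apply]
      exact (reg_sum Finset.univ _ (fun k _ => reg_mul (hreg1 i k) (hreg2 k j))).1
    rw [reg_iff] at this
    exact this hij
  · -- backward: the hard direction
    rintro ⟨i, k₀, hik₀⟩
    by_contra hno
    push_neg at hno
    have hprod : ∀ j, Reg z ((G₁ * G₂) i j) := by
      intro j; rw [reg_iff]; exact hno i j
    have hk₀ : ¬ Reg z (G₁ i k₀) := by rw [reg_iff]; exact fun h => h hik₀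
    -- the minimal polynomial of z over ℝ
    have hzint : IsIntegral ℝ z := Algebra.IsIntegral.isIntegral z
    set π : ℝ[X] := minpoly ℝ z with hπ
    have hπ0 : π ≠ 0 := minpoly.ne_zero hzint
    have hπirr : Irreducible π := minpoly.irreducible hzint
    have hdvd_iff : ∀ Q : ℝ[X], π ∣ Q ↔ aeval z Q = 0 := fun Q => minpoly.dvd_iff
    set π' : RatFunc ℝ := algebraMap ℝ[X] (RatFunc ℝ) π with hπ'
    have hπ'0 : π' ≠ 0 := by
      simpa [hπ'] using (RatFunc.algebraMap_ne_zero hπ0)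
    -- multiplying by a power of π' makes each entry of row i regular
    have hex : ∃ n : ℕ, ∀ k, Reg z (π' ^ n * G₁ i k) := by
      have hexk : ∀ k, ∃ n : ℕ, ∀ n' ≥ n, Reg z (π' ^ n' * G₁ i k) := by
        intro k
        obtain ⟨a, c, hcdvd, hfac⟩ :=
          WfDvdMonoid.max_power_factor (RatFunc.denom_ne_zero (G₁ i k)) hπirr
        have hc0 : c ≠ 0 := by
          rintro rfl; exact RatFunc.denom_ne_zero (G₁ i k) (by rw [hfac, mul_zero])
        have hcz : Polynomial.eval₂ (algebraMap ℝ ℂ) z c ≠ 0 := by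
          rw [← aeval_def]
          intro h0
          exact hcdvd ((hdvd_iff c).mpr h0)
        have hreg : Reg z (π' ^ a * G₁ i k) := by
          refine reg_of_eq_div hc0 (P := (G₁ i k).num) ?_ hcz
          have h1 : π' ^ a * G₁ i k =
              algebraMap ℝ[X] (RatFunc ℝ) (π ^ a) *
                (algebraMap ℝ[X] (RatFunc ℝ) (G₁ i k).num /
                  algebraMap ℝ[X] (RatFunc ℝ) (G₁ i k).denom) := by
            rw [RatFunc.num_div_denom, hπ', ← map_pow]
          have hπa : (algebraMap ℝ[X] (RatFunc ℝ)) (π ^ a) ≠ 0 :=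
            RatFunc.algebraMap_ne_zero (pow_ne_zero a hπ0)
          rw [h1, hfac, _root_.map_mul, ← mul_div_assoc, mul_div_mul_left _ _ hπa]
        refine ⟨a, fun n' hn' => ?_⟩
        obtain ⟨d, rfl⟩ := Nat.exists_eq_add_of_le hn'
        rw [pow_add, mul_comm (π' ^ a) (π' ^ d), mul_assoc]
        have : Reg z (π' ^ d) := by
          rw [hπ', ← map_pow]; exact reg_algebraMap z _
        exact reg_mul this hreg
      choose N hN using hexk
      refine ⟨Finset.univ.sup N, fun k => hN k _ ?_⟩
      exact Finset.le_sup (Finset.mem_univ k)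
    -- minimal such power
    have hnreg0 := Nat.find_spec hex
    have hnpos : Nat.find hex ≠ 0 := by
      intro h0
      apply hk₀
      have := hnreg0 k₀
      rwa [h0, pow_zero, one_mul] at this
    obtain ⟨n', hn'⟩ : ∃ n', Nat.find hex = n' + 1 :=
      ⟨Nat.find hex - 1, (Nat.succ_pred_eq_of_pos (Nat.pos_of_ne_zero hnpos)).symm⟩
    have hnreg : ∀ k, Reg z (π' ^ (n' + 1) * G₁ i k) := by rw [← hn']; exact hnreg0
    have hmin : ¬ ∀ k, Reg z (π' ^ n' * G₁ i k) := Nat.find_min hex (by omega)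
    push_neg at hmin
    obtain ⟨k₁, hk₁⟩ := hmin
    -- the regular row vector u and its evaluation w
    set u : Fin p → RatFunc ℝ := fun k => π' ^ (n' + 1) * G₁ i k with hu
    have hureg : ∀ k, Reg z (u k) := hnreg
    set w : Fin p → ℂ := fun k => ev z (u k) with hw
    -- w k₁ ≠ 0
    have hwk₁ : w k₁ ≠ 0 := by
      intro h0
      apply hk₁
      set g : RatFunc ℝ := u k₁ with hg
      have hgreg : Reg z g := hureg k₁
      have hnum0 : aeval z g.num = 0 := by
        have h0' : ev z g = 0 := h0
        rw [ev_eq] at h0'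
        rcases div_eq_zero_iff.mp h0' with h | h
        · exact h
        · exact absurd h (by rw [reg_iff] at hgreg; exact fun hh => hgreg (by rw [aeval_def] at hh ⊢; exact hh))
      obtain ⟨P, hP⟩ := (hdvd_iff g.num).mpr hnum0
      have hgne : π' ^ n' * G₁ i k₁ = g / π' := by
        rw [hg, hu]
        rw [eq_div_iff hπ'0]
        ring
      have hgd : g / π' = algebraMap ℝ[X] (RatFunc ℝ) P /
          algebraMap ℝ[X] (RatFunc ℝ) g.denom := by
        have h2 : g = algebraMap ℝ[X] (RatFunc ℝ) (π * P) /
            algebraMap ℝ[X] (RatFunc ℝ) g.denom := by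
          rw [← hP, RatFunc.num_div_denom]
        conv_lhs => rw [h2]
        rw [_root_.map_mul, hπ', div_div,
          mul_comm ((algebraMap ℝ[X] (RatFunc ℝ)) g.denom) ((algebraMap ℝ[X] (RatFunc ℝ)) π),
          mul_div_mul_left _ _ (RatFunc.algebraMap_ne_zero hπ0)]
      exact reg_of_eq_div (RatFunc.denom_ne_zero g) (hgne.trans hgd)
        (by rw [reg_iff, aeval_def] at hgreg; exact hgreg)
    -- w annihilates the evaluated matrix G₂(z)
    set A : Matrix (Fin p) (Fin m) ℂ :=
      Matrix.of fun k j => aeval z (G₂ k j).num / aeval z (G₂ k j).denom with hA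
    have hAev : ∀ k j, A k j = ev z (G₂ k j) := by
      intro k j; rw [hA, ev_eq]; rfl
    have hann : ∀ j, ∑ k, w k * A k j = 0 := by
      intro j
      have h1 : ∀ k, w k * A k j = ev z (u k * G₂ k j) := by
        intro k
        rw [hAev, hw, ev_mul (hureg k) (hreg2 k j)]
      calc ∑ k, w k * A k j = ∑ k, ev z (u k * G₂ k j) := by
            exact Finset.sum_congr rfl fun k _ => h1 k
        _ = ev z (∑ k, u k * G₂ k j) :=
            ((reg_sum Finset.univ _ (fun k _ => reg_mul (hureg k) (hreg2 k j))).2).symm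
        _ = ev z (π' ^ (n' + 1) * (G₁ * G₂) i j) := by
            rw [Matrix.mul_apply, Finset.mul_sum]
            congr 1
            exact Finset.sum_congr rfl fun k _ => by rw [hu, mul_assoc]
        _ = ev z (π' ^ (n' + 1)) * ev z ((G₁ * G₂) i j) := by
            refine ev_mul ?_ (hprod j)
            rw [hπ', ← map_pow]; exact reg_algebraMap z _
        _ = 0 := by
            have : ev z (π' ^ (n' + 1)) = 0 := by
              rw [hπ', ← map_pow, ev, RatFunc.eval_algebraMap, ← aeval_def]
              simp [hπ, minpoly.aeval, zero_pow (Nat.succ_ne_zero n')]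
            rw [this, zero_mul]
    -- full row rank forces w = 0, contradiction
    have hrank : A.rank = p := hG₂rank z hz
    have hrankT : Aᵀ.rank = p := by rw [Matrix.rank_transpose]; exact hrank
    have hker : LinearMap.ker (Aᵀ.mulVecLin) = ⊥ := by
      have h1 := LinearMap.finrank_range_add_finrank_ker (Aᵀ.mulVecLin)
      rw [show Module.finrank ℂ (LinearMap.range Aᵀ.mulVecLin) = p from hrankT] at h1
      rw [Module.finrank_fin_fun] at h1
      have h2 : Module.finrank ℂ (LinearMap.ker Aᵀ.mulVecLin) = 0 := by omega
      exact Submodule.finrank_eq_zero.mp h2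
    have hwker : w ∈ LinearMap.ker (Aᵀ.mulVecLin) := by
      rw [LinearMap.mem_ker, Matrix.mulVecLin_apply, Matrix.mulVec_transpose]
      funext j
      simpa [Matrix.vecMul, dotProduct] using hann j
    rw [hker, Submodule.mem_bot] at hwker
    rw [hwker] at hwk₁
    exact hwk₁ rfl

end
end

section
/- Stabilizability and detectability of the cascade realization (part (I) of the proof of Lemma 1): Let (A₁ ∈ ℝ^{n₁×n₁}, B₁ ∈ ℝ^{n₁×p}, C₁ ∈ ℝ^{q×n₁}, D₁ ∈ ℝ^{q×p}) and (A₂ ∈ ℝ^{n₂×n₂}, B₂ ∈ ℝ^{n₂×m}, C₂ ∈ ℝ^{p×n₂}, D₂ ∈ ℝ^{p×m}) be controllable and observable state-space realizations over ℝ. Assume every eigenvalue of A₂ has negative real part, and for every z ∈ ℂ with Re z ≥ 0 the complex matrix [[A₂ − z·I_{n₂}, B₂],[C₂, D₂]] has full row rank n₂ + p. Then the cascade realization with state matrix [[A₁, B₁·C₂],[0, A₂]], input matrix [[B₁·D₂],[B₂]], output matrix [C₁, D₁·C₂], and feedthrough D₁·D₂ is stabilizable and detectable. -/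
open Matrix

noncomputable section

/-- The PBH controllability rank condition at a point `z ∈ ℂ`:
`[A − z·I, B]` has full row rank. -/
def CtrbAt {n m : Type*} [Fintype n] [Fintype m] [DecidableEq n]
    (A : Matrix n n ℝ) (B : Matrix n m ℝ) (z : ℂ) : Prop :=
  (Matrix.fromCols (A.map Complex.ofReal - z • (1 : Matrix n n ℂ))
      (B.map Complex.ofReal)).rank = Fintype.card n

/-- A pair `(A, B)` is controllable if the PBH rank condition holds at every
`z ∈ ℂ`. -/
def Controllable {n m : Type*} [Fintype n] [Fintype m] [DecidableEq n]
    (A : Matrix n n ℝ) (B : Matrix n m ℝ) : Prop :=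
  ∀ z : ℂ, CtrbAt A B z

/-- A pair `(C, A)` is observable if `(Aᵀ, Cᵀ)` is controllable. -/
def Observable {n p : Type*} [Fintype n] [Fintype p] [DecidableEq n]
    (A : Matrix n n ℝ) (C : Matrix p n ℝ) : Prop :=
  ∀ z : ℂ, CtrbAt Aᵀ Cᵀ z

/-- A pair `(A, B)` is stabilizable if the PBH rank condition holds at every
`z ∈ ℂ` with `Re z ≥ 0`. -/
def Stabilizable {n m : Type*} [Fintype n] [Fintype m] [DecidableEq n]
    (A : Matrix n n ℝ) (B : Matrix n m ℝ) : Prop :=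
  ∀ z : ℂ, 0 ≤ z.re → CtrbAt A B z

/-- A pair `(C, A)` is detectable if `(Aᵀ, Cᵀ)` is stabilizable. -/
def Detectable {n p : Type*} [Fintype n] [Fintype p] [DecidableEq n]
    (A : Matrix n n ℝ) (C : Matrix p n ℝ) : Prop :=
  ∀ z : ℂ, 0 ≤ z.re → CtrbAt Aᵀ Cᵀ z

/-!
Both PBH tests reduce to left kernels: a row vector `(x, y)` annihilating the test matrix of the
cascade must vanish. For stabilizability the block equations say that `(y, x B₁)` annihilates
`[[A₂ − z, B₂], [C₂, D₂]]`, which has full row rank on `Re z ≥ 0`; so `y = 0` and `x B₁ = 0`,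
hence `x [A₁ − z, B₁] = 0` and controllability of `(A₁, B₁)` gives `x = 0`. For detectability
the transposed cascade is block triangular: `y (A₂ᵀ − z) = 0` forces `y = 0` because `A₂` has no
eigenvalue with `Re z ≥ 0`, and then observability of `(A₁, C₁)` gives `x = 0`.
-/

namespace Matrix

theorem rank_eq_card_height_iff {K m n : Type*} [Field K] [Fintype m] [Fintype n]
    (M : Matrix m n K) : M.rank = Fintype.card m ↔ ∀ v, v ᵥ* M = 0 → v = 0 := by
  rw [rank_eq_finrank_span_row, eq_comm, ← Set.finrank,
    ← linearIndependent_iff_card_eq_finrank_span, ← vecMul_injective_iff, ← coe_vecMulLinear,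
    injective_iff_map_eq_zero]
  rfl

theorem fromBlocks_sub_smul_one {S n₁ n₂ : Type*} [Ring S] [DecidableEq n₁] [DecidableEq n₂]
    (A : Matrix n₁ n₁ S) (B : Matrix n₁ n₂ S) (C : Matrix n₂ n₁ S) (D : Matrix n₂ n₂ S) (z : S) :
    fromBlocks A B C D - z • 1 = fromBlocks (A - z • 1) B C (D - z • 1) := by
  rw [← fromBlocks_one, fromBlocks_smul, sub_eq_add_neg, fromBlocks_neg, fromBlocks_add]
  simp [sub_eq_add_neg]

variable {R : Type*} [Semiring R] {n₁ n₂ k₁ k₂ p m q : Type*} [Fintype n₁] [Fintype n₂]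

theorem eq_zero_of_vecMul_fromCols_fromBlocks_mul_eq_zero [Fintype p] {E₁ : Matrix n₁ k₁ R}
    {B₁ : Matrix n₁ p R} {E₂ : Matrix n₂ k₂ R} {B₂ : Matrix n₂ m R} {C₂ : Matrix p k₂ R}
    {D₂ : Matrix p m R} (h₁ : ∀ x, x ᵥ* fromCols E₁ B₁ = 0 → x = 0)
    (h₂ : ∀ y, y ᵥ* fromBlocks E₂ B₂ C₂ D₂ = 0 → y = 0) (v : n₁ ⊕ n₂ → R)
    (hv : v ᵥ* fromCols (fromBlocks E₁ (B₁ * C₂) 0 E₂) (fromRows (B₁ * D₂) B₂) = 0) :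
    v = 0 := by
  obtain ⟨x, y, rfl⟩ : ∃ x y, v = Sum.elim x y := ⟨_, _, (Sum.elim_comp_inl_inr v).symm⟩
  simp only [vecMul_fromCols, vecMul_fromBlocks, sumElim_vecMul_fromRows, Sum.elim_comp_inl,
    Sum.elim_comp_inr, vecMul_zero, add_zero, ← vecMul_vecMul, ← Sum.elim_zero_zero,
    Sum.elim_eq_iff] at hv ⊢
  obtain ⟨⟨hE₁, hC₂⟩, hD₂⟩ := hv
  have hyx : Sum.elim y (x ᵥ* B₁) = 0 := h₂ _ <| by
    simp only [vecMul_fromBlocks, Sum.elim_comp_inl, Sum.elim_comp_inr, add_comm (y ᵥ* _), hC₂,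
      hD₂, Sum.elim_zero_zero]
  rw [← Sum.elim_zero_zero, Sum.elim_eq_iff] at hyx
  refine ⟨h₁ x ?_, hyx.1⟩
  rw [vecMul_fromCols, hE₁, hyx.2, Sum.elim_zero_zero]

theorem eq_zero_of_vecMul_fromCols_fromBlocks_zero_eq_zero {E₁ : Matrix n₁ k₁ R}
    {F₁ : Matrix n₁ q R} {G : Matrix n₂ k₁ R} {E₂ : Matrix n₂ k₂ R} {H : Matrix n₂ q R}
    (h₁ : ∀ x, x ᵥ* fromCols E₁ F₁ = 0 → x = 0) (h₂ : ∀ y, y ᵥ* E₂ = 0 → y = 0)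
    (v : n₁ ⊕ n₂ → R) (hv : v ᵥ* fromCols (fromBlocks E₁ 0 G E₂) (fromRows F₁ H) = 0) :
    v = 0 := by
  obtain ⟨x, y, rfl⟩ : ∃ x y, v = Sum.elim x y := ⟨_, _, (Sum.elim_comp_inl_inr v).symm⟩
  simp only [vecMul_fromCols, vecMul_fromBlocks, sumElim_vecMul_fromRows, Sum.elim_comp_inl,
    Sum.elim_comp_inr, vecMul_zero, zero_add, ← Sum.elim_zero_zero, Sum.elim_eq_iff] at hv ⊢
  obtain ⟨⟨hE₁, hE₂⟩, hF₁⟩ := hv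
  obtain rfl : y = 0 := h₂ y hE₂
  refine ⟨h₁ x ?_, rfl⟩
  rw [zero_vecMul, add_zero] at hE₁ hF₁
  rw [vecMul_fromCols, hE₁, hF₁, Sum.elim_zero_zero]

end Matrix

theorem ctrbAt_iff {n m : Type*} [Fintype n] [Fintype m] [DecidableEq n]
    (A : Matrix n n ℝ) (B : Matrix n m ℝ) (z : ℂ) :
    CtrbAt A B z ↔ ∀ v, v ᵥ* fromCols (A.map Complex.ofReal - z • 1) (B.map Complex.ofReal) = 0 →
      v = 0 :=
  rank_eq_card_height_iff _

theorem map_mul_ofReal {l m n : Type*} [Fintype m] (M : Matrix l m ℝ) (N : Matrix m n ℝ) :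
    (M * N).map Complex.ofReal = M.map Complex.ofReal * N.map Complex.ofReal :=
  Matrix.map_mul (f := Complex.ofRealHom)

variable {n₁ n₂ p q m : Type*} [Fintype n₁] [Fintype n₂] [DecidableEq n₁] [DecidableEq n₂]
  {A₁ : Matrix n₁ n₁ ℝ} {A₂ : Matrix n₂ n₂ ℝ} {z : ℂ}

theorem CtrbAt.cascade [Fintype p] [Fintype m] {B₁ : Matrix n₁ p ℝ} {B₂ : Matrix n₂ m ℝ}
    {C₂ : Matrix p n₂ ℝ} {D₂ : Matrix p m ℝ} (h₁ : CtrbAt A₁ B₁ z)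
    (h₂ : (fromBlocks (A₂.map Complex.ofReal - z • 1) (B₂.map Complex.ofReal)
      (C₂.map Complex.ofReal) (D₂.map Complex.ofReal)).rank = Fintype.card (n₂ ⊕ p)) :
    CtrbAt (fromBlocks A₁ (B₁ * C₂) 0 A₂) (fromRows (B₁ * D₂) B₂) z := by
  rw [ctrbAt_iff] at h₁ ⊢
  rw [rank_eq_card_height_iff] at h₂
  rw [fromBlocks_map, fromBlocks_sub_smul_one, fromRows_map, map_mul_ofReal, map_mul_ofReal,
    Matrix.map_zero _ Complex.ofReal_zero]
  exact eq_zero_of_vecMul_fromCols_fromBlocks_mul_eq_zero h₁ h₂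

theorem CtrbAt.cascade_transpose [Fintype q] {C₁ : Matrix q n₁ ℝ} {X : Matrix n₁ n₂ ℝ}
    {Y : Matrix q n₂ ℝ} (h₁ : CtrbAt A₁ᵀ C₁ᵀ z) (h₂ : (A₂.map Complex.ofReal - z • 1).det ≠ 0) :
    CtrbAt (fromBlocks A₁ X 0 A₂)ᵀ (fromCols C₁ Y)ᵀ z := by
  rw [ctrbAt_iff] at h₁ ⊢
  rw [fromBlocks_transpose, transpose_fromCols, transpose_zero, fromBlocks_map,
    fromBlocks_sub_smul_one, fromRows_map, Matrix.map_zero _ Complex.ofReal_zero]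
  refine eq_zero_of_vecMul_fromCols_fromBlocks_zero_eq_zero h₁ fun y hy => ?_
  refine eq_zero_of_vecMul_eq_zero ?_ hy
  rwa [transpose_map, ← det_transpose, transpose_sub, transpose_transpose, transpose_smul,
    transpose_one]

theorem cascade_stabilizable_detectable_general {n₁ n₂ p q m : ℕ}
    (A₁ : Matrix (Fin n₁) (Fin n₁) ℝ) (B₁ : Matrix (Fin n₁) (Fin p) ℝ)
    (C₁ : Matrix (Fin q) (Fin n₁) ℝ) (D₁ : Matrix (Fin q) (Fin p) ℝ)
    (A₂ : Matrix (Fin n₂) (Fin n₂) ℝ) (B₂ : Matrix (Fin n₂) (Fin m) ℝ)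
    (C₂ : Matrix (Fin p) (Fin n₂) ℝ) (D₂ : Matrix (Fin p) (Fin m) ℝ)
    (hc₁ : Controllable A₁ B₁) (ho₁ : Observable A₁ C₁)
    (hA₂ : ∀ z : ℂ, (A₂.map Complex.ofReal - z • (1 : Matrix (Fin n₂) (Fin n₂) ℂ)).det = 0 →
      z.re < 0)
    (hrows : ∀ z : ℂ, 0 ≤ z.re →
      (Matrix.fromBlocks (A₂.map Complex.ofReal - z • (1 : Matrix (Fin n₂) (Fin n₂) ℂ))
          (B₂.map Complex.ofReal) (C₂.map Complex.ofReal) (D₂.map Complex.ofReal)).rank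
        = n₂ + p) :
    Stabilizable (Matrix.fromBlocks A₁ (B₁ * C₂) 0 A₂) (Matrix.fromRows (B₁ * D₂) B₂) ∧
    Detectable (Matrix.fromBlocks A₁ (B₁ * C₂) 0 A₂) (Matrix.fromCols C₁ (D₁ * C₂)) :=
  ⟨fun z hz => (hc₁ z).cascade (by simpa using hrows z hz),
    fun z hz => (ho₁ z).cascade_transpose fun hdet => (hA₂ z hdet).not_ge hz⟩

/-- **Stabilizability and detectability of the cascade realization (part (I) of
the proof of Lemma 1).** -/
theorem cascade_stabilizable_detectable {n₁ n₂ p q m : ℕ}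
    (A₁ : Matrix (Fin n₁) (Fin n₁) ℝ) (B₁ : Matrix (Fin n₁) (Fin p) ℝ)
    (C₁ : Matrix (Fin q) (Fin n₁) ℝ) (D₁ : Matrix (Fin q) (Fin p) ℝ)
    (A₂ : Matrix (Fin n₂) (Fin n₂) ℝ) (B₂ : Matrix (Fin n₂) (Fin m) ℝ)
    (C₂ : Matrix (Fin p) (Fin n₂) ℝ) (D₂ : Matrix (Fin p) (Fin m) ℝ)
    (hc₁ : Controllable A₁ B₁) (ho₁ : Observable A₁ C₁)
    (hc₂ : Controllable A₂ B₂) (ho₂ : Observable A₂ C₂)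
    (hA₂ : ∀ z : ℂ, (A₂.map Complex.ofReal - z • (1 : Matrix (Fin n₂) (Fin n₂) ℂ)).det = 0 →
      z.re < 0)
    (hrows : ∀ z : ℂ, 0 ≤ z.re →
      (Matrix.fromBlocks (A₂.map Complex.ofReal - z • (1 : Matrix (Fin n₂) (Fin n₂) ℂ))
          (B₂.map Complex.ofReal) (C₂.map Complex.ofReal) (D₂.map Complex.ofReal)).rank
        = n₂ + p) :
    Stabilizable (Matrix.fromBlocks A₁ (B₁ * C₂) 0 A₂) (Matrix.fromRows (B₁ * D₂) B₂) ∧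
    Detectable (Matrix.fromBlocks A₁ (B₁ * C₂) 0 A₂) (Matrix.fromCols C₁ (D₁ * C₂)) :=
  cascade_stabilizable_detectable_general A₁ B₁ C₁ D₁ A₂ B₂ C₂ D₂ hc₁ ho₁ hA₂ hrows
end
end

section
/- Block inverse identity used in the proof of Theorem 4: Let M, N, M̃, Ñ, X, Y, X̃, Ỹ be matrices over RatFunc ℝ of sizes M (m×m), N (p×m), M̃ (p×p), Ñ (p×m), X (m×p), Y (m×m), X̃ (m×p), Ỹ (p×p) satisfying [[Y, X],[−Ñ, M̃]] · [[M, −X̃],[N, Ỹ]] = I_{m+p}, let Q be an m×p matrix with X_Q := X + Q·M̃, Y_Q := Y − Q·Ñ, X̃_Q := X̃ + M·Q, Ỹ_Q := Ỹ − N·Q, assume M is invertible, and let Ω be any invertible m×m matrix over RatFunc ℝ. Then [[M̃, Ñ],[−Ω⁻¹·M·X_Q, Ω⁻¹·M·Y_Q]] · [[Ỹ_Q, −N·M⁻¹·Ω],[X̃_Q, Ω]] = I_{p+m}. -/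
open Matrix

noncomputable section

/-- **Block inverse identity used in the proof of Theorem 4.** -/
theorem block_inverse_identity_thm4 {m p : ℕ}
    (M : Matrix (Fin m) (Fin m) (RatFunc ℝ)) (N : Matrix (Fin p) (Fin m) (RatFunc ℝ))
    (Mt : Matrix (Fin p) (Fin p) (RatFunc ℝ)) (Nt : Matrix (Fin p) (Fin m) (RatFunc ℝ))
    (X : Matrix (Fin m) (Fin p) (RatFunc ℝ)) (Y : Matrix (Fin m) (Fin m) (RatFunc ℝ))
    (Xt : Matrix (Fin m) (Fin p) (RatFunc ℝ)) (Yt : Matrix (Fin p) (Fin p) (RatFunc ℝ))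
    (hBez : Matrix.fromBlocks Y X (-Nt) Mt * Matrix.fromBlocks M (-Xt) N Yt = 1)
    (Q : Matrix (Fin m) (Fin p) (RatFunc ℝ))
    (XQ : Matrix (Fin m) (Fin p) (RatFunc ℝ)) (hXQ : XQ = X + Q * Mt)
    (YQ : Matrix (Fin m) (Fin m) (RatFunc ℝ)) (hYQ : YQ = Y - Q * Nt)
    (XtQ : Matrix (Fin m) (Fin p) (RatFunc ℝ)) (hXtQ : XtQ = Xt + M * Q)
    (YtQ : Matrix (Fin p) (Fin p) (RatFunc ℝ)) (hYtQ : YtQ = Yt - N * Q)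
    (hMinv : IsUnit M)
    (Ω : Matrix (Fin m) (Fin m) (RatFunc ℝ)) (hΩinv : IsUnit Ω) :
    Matrix.fromBlocks Mt Nt (-(Ω⁻¹ * M * XQ)) (Ω⁻¹ * M * YQ) *
      Matrix.fromBlocks YtQ (-(N * M⁻¹ * Ω)) XtQ Ω = 1 := by
  have hMMi : M * M⁻¹ = 1 := Matrix.mul_nonsing_inv M ((Matrix.isUnit_iff_isUnit_det M).mp hMinv)
  have hΩiΩ : Ω⁻¹ * Ω = 1 := Matrix.nonsing_inv_mul Ω ((Matrix.isUnit_iff_isUnit_det Ω).mp hΩinv)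
  rw [Matrix.fromBlocks_multiply, ← Matrix.fromBlocks_one] at hBez
  obtain ⟨h11, h12, h21, h22⟩ := Matrix.fromBlocks_inj.mp hBez
  have e : Nt * M = Mt * N := by rwa [Matrix.neg_mul, neg_add_eq_zero] at h21
  have h22' : Nt * Xt + Mt * Yt = 1 := by
    rwa [Matrix.neg_mul, Matrix.mul_neg, neg_neg] at h22
  have h12' : Y * Xt = X * Yt := by rwa [Matrix.mul_neg, neg_add_eq_zero] at h12
  subst hXQ hYQ hXtQ hYtQ
  have hXN : X * N = 1 - Y * M := by rw [← h11]; abel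
  -- key : (Y - Q Nt)(Xt + M Q) = (X + Q Mt)(Yt - N Q)
  have key : (Y - Q * Nt) * (Xt + M * Q) = (X + Q * Mt) * (Yt - N * Q) := by
    have l : Y * (M * Q) + X * (N * Q) = Q := by
      rw [← Matrix.mul_assoc Y M Q, ← Matrix.mul_assoc X N Q, ← Matrix.add_mul, h11,
        Matrix.one_mul]
    have r : Q * (Nt * Xt) + Q * (Mt * Yt) = Q := by
      rw [← Matrix.mul_add, h22', Matrix.mul_one]
    have h := l.trans r.symm
    have eq : Q * (Nt * (M * Q)) = Q * (Mt * (N * Q)) := by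
      rw [← Matrix.mul_assoc Nt M Q, e, Matrix.mul_assoc]
    rw [← sub_eq_zero] at h ⊢
    simp only [Matrix.sub_mul, Matrix.add_mul, Matrix.mul_sub, Matrix.mul_add,
      Matrix.mul_assoc] at h ⊢
    rw [h12', eq]
    abel_nf at h ⊢
    convert h using 2
  -- key2 : M (X + Q Mt)(N M⁻¹) + M (Y - Q Nt) = 1
  have t2' : M * X * (N * M⁻¹) = 1 - M * Y := by
    calc M * X * (N * M⁻¹) = M * (X * N) * M⁻¹ := by
          rw [Matrix.mul_assoc M X (N * M⁻¹), ← Matrix.mul_assoc X N M⁻¹,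
            ← Matrix.mul_assoc M (X * N) M⁻¹]
      _ = M * (1 - Y * M) * M⁻¹ := by rw [hXN]
      _ = 1 - M * Y := by
          rw [Matrix.mul_sub, Matrix.mul_one, Matrix.sub_mul, hMMi,
            ← Matrix.mul_assoc M Y M, Matrix.mul_assoc (M * Y) M M⁻¹, hMMi, Matrix.mul_one]
  have t1' : M * (Q * Mt) * (N * M⁻¹) = M * (Q * Nt) := by
    calc M * (Q * Mt) * (N * M⁻¹) = M * (Q * (Mt * N)) * M⁻¹ := by
          rw [Matrix.mul_assoc M (Q * Mt) (N * M⁻¹), ← Matrix.mul_assoc (Q * Mt) N M⁻¹,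
            Matrix.mul_assoc Q Mt N, ← Matrix.mul_assoc M (Q * (Mt * N)) M⁻¹]
      _ = M * (Q * (Nt * M)) * M⁻¹ := by rw [e]
      _ = M * (Q * Nt) := by
          rw [← Matrix.mul_assoc Q Nt M, ← Matrix.mul_assoc M (Q * Nt) M,
            Matrix.mul_assoc (M * (Q * Nt)) M M⁻¹, hMMi, Matrix.mul_one]
  have key2 : M * (X + Q * Mt) * (N * M⁻¹) + M * (Y - Q * Nt) = 1 := by
    simp only [Matrix.mul_add, Matrix.add_mul, Matrix.mul_sub]
    rw [t1', t2']
    abel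
  rw [Matrix.fromBlocks_multiply, ← Matrix.fromBlocks_one]
  refine Matrix.fromBlocks_inj.mpr ⟨?_, ?_, ?_, ?_⟩
  · -- block (1,1)
    have eq1 : Nt * (M * Q) = Mt * (N * Q) := by
      rw [← Matrix.mul_assoc, e, Matrix.mul_assoc]
    simp only [Matrix.mul_sub, Matrix.mul_add]
    rw [eq1, ← h22']
    abel
  · -- block (1,2)
    have eq2 : Mt * (N * (M⁻¹ * Ω)) = Nt * Ω := by
      rw [← Matrix.mul_assoc Mt, ← e, Matrix.mul_assoc, ← Matrix.mul_assoc M, hMMi,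
        Matrix.one_mul]
    simp only [Matrix.mul_neg, Matrix.mul_assoc]
    rw [eq2, neg_add_cancel]
  · -- block (2,1)
    simp only [Matrix.neg_mul, Matrix.mul_assoc]
    rw [key, neg_add_cancel]
  · -- block (2,2)
    have final : Ω⁻¹ * ((M * (X + Q * Mt) * (N * M⁻¹) + M * (Y - Q * Nt)) * Ω) = 1 := by
      rw [key2, Matrix.one_mul, hΩiΩ]
    simp only [Matrix.neg_mul, Matrix.mul_neg, neg_neg, Matrix.mul_add, Matrix.add_mul,
      Matrix.mul_sub, Matrix.sub_mul, Matrix.mul_assoc] at final ⊢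
    abel_nf at final ⊢
    convert final using 2
end
end

section
/- Failure of internal stability for the closed-loop-map-based implementation (Theorem 4): Let (M, N, M̃, Ñ, X, Y, X̃, Ỹ) be a DCF of the p×m matrix G over RatFunc ℝ, let Q be an m×p matrix with X_Q := X + Q·M̃, Y_Q := Y − Q·Ñ, X̃_Q := X̃ + M·Q, Ỹ_Q := Ỹ − N·Q, and assume Ω := (M·Y_Q)^diag is invertible. Suppose the vectors z, r, ν ∈ (RatFunc ℝ)^p and u, w, δ_u ∈ (RatFunc ℝ)^m satisfy M̃·z + Ñ·u = −Ñ·w + M̃·r − M̃·ν and −Ω⁻¹·M·X_Q·z + Ω⁻¹·M·Y_Q·u = (I_m − Ω⁻¹·M·Y_Q)·δ_u. Then z = −Ỹ_Q·Ñ·w + Ỹ_Q·M̃·r − Ỹ_Q·M̃·ν + (N·Y_Q − G·Ω)·δ_u; in particular, if w = 0, r = 0 and ν = 0, the closed-loop map from δ_u to z equals N·Y_Q − G·Ω. Moreover, if all entries of N and Y_Q are stable and some entry of G·Ω has an unstable pole, then some entry of N·Y_Q − G·Ω has an unstable pole (so the implementation is not internally stable). -/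
open Matrix Polynomial

noncomputable section

lemma aeval_zero_of_dvd {s : ℂ} {d e : Polynomial ℝ} (h : d ∣ e) (hd : aeval s d = 0) :
    aeval s e = 0 := by
  obtain ⟨c, rfl⟩ := h; simp [hd]

lemma denom_neg_dvd (f : RatFunc ℝ) : (-f).denom ∣ f.denom := by
  have h : -f = RatFunc.C (-1) * f := by simp
  have := RatFunc.denom_mul_dvd (RatFunc.C (-1 : ℝ)) f
  rwa [← h, RatFunc.denom_C, one_mul] at this

lemma RFStable_zero : RFStable 0 := by
  intro s hs
  rw [RatFunc.denom_zero] at hs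
  simp at hs

lemma RFStable_add {f g : RatFunc ℝ} (hf : RFStable f) (hg : RFStable g) :
    RFStable (f + g) := by
  intro s hs
  have h0 := aeval_zero_of_dvd (RatFunc.denom_add_dvd f g) hs
  rw [_root_.map_mul] at h0
  rcases mul_eq_zero.mp h0 with h | h
  · exact hf s h
  · exact hg s h

lemma RFStable_mul {f g : RatFunc ℝ} (hf : RFStable f) (hg : RFStable g) :
    RFStable (f * g) := by
  intro s hs
  have h0 := aeval_zero_of_dvd (RatFunc.denom_mul_dvd f g) hs
  rw [_root_.map_mul] at h0
  rcases mul_eq_zero.mp h0 with h | h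
  · exact hf s h
  · exact hg s h

lemma RFStable_sum {ι : Type*} (t : Finset ι) (f : ι → RatFunc ℝ)
    (h : ∀ i ∈ t, RFStable (f i)) : RFStable (∑ i ∈ t, f i) := by
  classical
  induction t using Finset.cons_induction with
  | empty => simpa using RFStable_zero
  | cons a t ha ih =>
    rw [Finset.sum_cons]
    exact RFStable_add (h a (Finset.mem_cons_self a t))
      (ih fun i hi => h i (Finset.mem_cons_of_mem hi))

set_option maxHeartbeats 1000000 in
/-- **Failure of internal stability for the closed-loop-map-based
implementation (Theorem 4).** The closed-loop map from `δ_u` to `z` equals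
`N·Y_Q − G·Ω`; if `G·Ω` has an unstable pole while `N` and `Y_Q` are stable,
then this closed-loop map has an unstable pole. -/
theorem closed_loop_map_implementation_unstable {m p : ℕ}
    (G : Matrix (Fin p) (Fin m) (RatFunc ℝ))
    (M : Matrix (Fin m) (Fin m) (RatFunc ℝ)) (N : Matrix (Fin p) (Fin m) (RatFunc ℝ))
    (Mt : Matrix (Fin p) (Fin p) (RatFunc ℝ)) (Nt : Matrix (Fin p) (Fin m) (RatFunc ℝ))
    (X : Matrix (Fin m) (Fin p) (RatFunc ℝ)) (Y : Matrix (Fin m) (Fin m) (RatFunc ℝ))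
    (Xt : Matrix (Fin m) (Fin p) (RatFunc ℝ)) (Yt : Matrix (Fin p) (Fin p) (RatFunc ℝ))
    (hMinv : IsUnit M) (hMtinv : IsUnit Mt)
    (hGr : G = N * M⁻¹) (hGl : G = Mt⁻¹ * Nt)
    (hBez : Matrix.fromBlocks Y X (-Nt) Mt * Matrix.fromBlocks M (-Xt) N Yt = 1)
    (Q : Matrix (Fin m) (Fin p) (RatFunc ℝ))
    (XQ : Matrix (Fin m) (Fin p) (RatFunc ℝ)) (hXQ : XQ = X + Q * Mt)
    (YQ : Matrix (Fin m) (Fin m) (RatFunc ℝ)) (hYQ : YQ = Y - Q * Nt)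
    (XtQ : Matrix (Fin m) (Fin p) (RatFunc ℝ)) (hXtQ : XtQ = Xt + M * Q)
    (YtQ : Matrix (Fin p) (Fin p) (RatFunc ℝ)) (hYtQ : YtQ = Yt - N * Q)
    (Ω : Matrix (Fin m) (Fin m) (RatFunc ℝ))
    (hΩ : Ω = Matrix.diagonal fun i => (M * YQ) i i)
    (hΩinv : IsUnit Ω)
    (z r ν : Fin p → RatFunc ℝ) (u w δu : Fin m → RatFunc ℝ)
    (hplant : Mt.mulVec z + Nt.mulVec u =
      -(Nt.mulVec w) + Mt.mulVec r - Mt.mulVec ν)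
    (hctrl : -((Ω⁻¹ * M * XQ).mulVec z) + (Ω⁻¹ * M * YQ).mulVec u =
      ((1 : Matrix (Fin m) (Fin m) (RatFunc ℝ)) - Ω⁻¹ * M * YQ).mulVec δu) :
    z = -((YtQ * Nt).mulVec w) + (YtQ * Mt).mulVec r - (YtQ * Mt).mulVec ν
        + (N * YQ - G * Ω).mulVec δu ∧
    ((MatStable N ∧ MatStable YQ ∧
      (∃ (i : Fin p) (j : Fin m) (s : ℂ), 0 ≤ s.re ∧ aeval s (((G * Ω) i j).denom) = 0)) →
     ∃ (i : Fin p) (j : Fin m) (s : ℂ), 0 ≤ s.re ∧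
       aeval s (((N * YQ - G * Ω) i j).denom) = 0) := by
  -- extract the four Bézout identities
  have hb := hBez
  rw [Matrix.fromBlocks_multiply, ← Matrix.fromBlocks_one] at hb
  obtain ⟨h11, h12, h21, h22⟩ := Matrix.fromBlocks_inj.mp hb
  -- h11 : Y*M + X*N = 1, h12 : Y*(-Xt) + X*Yt = 0
  -- h21 : (-Nt)*M + Mt*N = 0, h22 : (-Nt)*(-Xt) + Mt*Yt = 1
  have hNM : Nt * M = Mt * N := by
    have h := h21
    rw [Matrix.neg_mul] at h
    exact neg_add_eq_zero.mp h
  -- the modified Bézout identity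
  have hBezQ : Matrix.fromBlocks YQ XQ (-Nt) Mt * Matrix.fromBlocks M (-XtQ) N YtQ = 1 := by
    rw [Matrix.fromBlocks_multiply, ← Matrix.fromBlocks_one]
    subst hXQ hYQ hXtQ hYtQ
    refine Matrix.fromBlocks_inj.mpr ⟨?_, ?_, h21, ?_⟩
    · have e : (Y - Q * Nt) * M + (X + Q * Mt) * N
          = Y * M + X * N + (Q * (Mt * N) - Q * (Nt * M)) := by
        simp only [Matrix.add_mul, Matrix.mul_add, Matrix.sub_mul, Matrix.mul_sub,
          Matrix.neg_mul, Matrix.mul_neg, Matrix.mul_assoc]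
        abel
      rw [e, hNM, sub_self, add_zero, h11]
    · have e : (Y - Q * Nt) * -(Xt + M * Q) + (X + Q * Mt) * (Yt - N * Q)
          = (Y * (-Xt) + X * Yt) - (Y * M + X * N) * Q + Q * ((-Nt) * (-Xt) + Mt * Yt)
            + Q * ((Nt * M) * Q) - Q * ((Mt * N) * Q) := by
        simp only [Matrix.add_mul, Matrix.mul_add, Matrix.sub_mul, Matrix.mul_sub,
          Matrix.neg_mul, Matrix.mul_neg, Matrix.mul_assoc, neg_neg]
        abel
      rw [e, hNM, h12, h11, h22]
      simp only [Matrix.one_mul, Matrix.mul_one]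
      abel
    · have e : (-Nt) * -(Xt + M * Q) + Mt * (Yt - N * Q)
          = ((-Nt) * (-Xt) + Mt * Yt) + ((Nt * M) * Q - (Mt * N) * Q) := by
        simp only [Matrix.add_mul, Matrix.mul_add, Matrix.sub_mul, Matrix.mul_sub,
          Matrix.neg_mul, Matrix.mul_neg, Matrix.mul_assoc, neg_neg]
        abel
      rw [e, hNM, sub_self, add_zero, h22]
  -- the reversed identity (square case)
  have hrev := mul_eq_one_comm.mp hBezQ
  rw [Matrix.fromBlocks_multiply, ← Matrix.fromBlocks_one] at hrev
  obtain ⟨k11, k12, k21, k22⟩ := Matrix.fromBlocks_inj.mp hrev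
  -- k21 : N*YQ + YtQ*(-Nt) = 0, k22 : N*XQ + YtQ*Mt = 1
  have hNYQ : N * YQ = YtQ * Nt := by
    have h := k21
    rw [Matrix.mul_neg] at h
    exact add_neg_eq_zero.mp h
  have hΩdet : IsUnit Ω.det := (Matrix.isUnit_iff_isUnit_det Ω).mp hΩinv
  have hMdet : IsUnit M.det := (Matrix.isUnit_iff_isUnit_det M).mp hMinv
  have hΩΩ : Ω * Ω⁻¹ = 1 := Matrix.mul_nonsing_inv Ω hΩdet
  have hGM : G * M = N := by
    rw [hGr, Matrix.mul_assoc, Matrix.nonsing_inv_mul M hMdet, Matrix.mul_one]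
  have hA : Ω * (Ω⁻¹ * M * XQ) = M * XQ := by
    rw [← Matrix.mul_assoc, ← Matrix.mul_assoc, hΩΩ, Matrix.one_mul]
  have hB : Ω * (Ω⁻¹ * M * YQ) = M * YQ := by
    rw [← Matrix.mul_assoc, ← Matrix.mul_assoc, hΩΩ, Matrix.one_mul]
  have hC : Ω * (1 - Ω⁻¹ * M * YQ) = Ω - M * YQ := by
    rw [Matrix.mul_sub, Matrix.mul_one, hB]
  -- apply Ω to the controller equation
  have hc2 : -((M * XQ).mulVec z) + (M * YQ).mulVec u = (Ω - M * YQ).mulVec δu := by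
    have h := congrArg (fun v => Ω.mulVec v) hctrl
    simpa [Matrix.mulVec_add, Matrix.mulVec_neg, Matrix.mulVec_mulVec, hA, hB, hC] using h
  -- apply G
  have hGA : G * (M * XQ) = N * XQ := by rw [← Matrix.mul_assoc, hGM]
  have hGB : G * (M * YQ) = N * YQ := by rw [← Matrix.mul_assoc, hGM]
  have hGC : G * (Ω - M * YQ) = G * Ω - N * YQ := by
    rw [Matrix.mul_sub, hGB]
  have hc3 : -((N * XQ).mulVec z) + (N * YQ).mulVec u = (G * Ω - N * YQ).mulVec δu := by
    have h := congrArg (fun v => G.mulVec v) hc2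
    simpa [Matrix.mulVec_add, Matrix.mulVec_neg, Matrix.mulVec_mulVec, hGA, hGB, hGC] using h
  have hc4 : (N * XQ).mulVec z - (N * YQ).mulVec u = (N * YQ - G * Ω).mulVec δu := by
    have h : (N * XQ).mulVec z - (N * YQ).mulVec u = -((G * Ω - N * YQ).mulVec δu) := by
      rw [← hc3]; abel
    rw [h, ← Matrix.neg_mulVec, neg_sub]
  -- apply YtQ to the plant equation
  have hp2 : (YtQ * Mt).mulVec z + (YtQ * Nt).mulVec u
      = -((YtQ * Nt).mulVec w) + (YtQ * Mt).mulVec r - (YtQ * Mt).mulVec ν := by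
    have h := congrArg (fun v => YtQ.mulVec v) hplant
    simpa [Matrix.mulVec_add, Matrix.mulVec_sub, Matrix.mulVec_neg,
      Matrix.mulVec_mulVec] using h
  have h2 : (YtQ * Mt).mulVec z + (N * XQ).mulVec z = z := by
    rw [← Matrix.add_mulVec, add_comm (YtQ * Mt), k22, Matrix.one_mulVec]
  constructor
  · calc z = (YtQ * Mt).mulVec z + (N * XQ).mulVec z := h2.symm
      _ = ((YtQ * Mt).mulVec z + (YtQ * Nt).mulVec u)
            + ((N * XQ).mulVec z - (N * YQ).mulVec u) := by
          rw [hNYQ]; abel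
      _ = (-((YtQ * Nt).mulVec w) + (YtQ * Mt).mulVec r - (YtQ * Mt).mulVec ν)
            + (N * YQ - G * Ω).mulVec δu := by rw [hp2, hc4]
  · rintro ⟨hN, hYQs, ⟨i, j, s, hsre, hs⟩⟩
    refine ⟨i, j, s, hsre, ?_⟩
    set a := (N * YQ) i j with ha_def
    set b := (G * Ω) i j with hb_def
    have ha : RFStable a := by
      have : a = ∑ k, N i k * YQ k j := by rw [ha_def, Matrix.mul_apply]
      rw [this]
      exact RFStable_sum _ _ fun k _ => RFStable_mul (hN i k) (hYQs k j)
    have hdvd1 : b.denom ∣ a.denom * (-(a - b)).denom := by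
      have hd := RatFunc.denom_add_dvd a (-(a - b))
      rwa [show a + -(a - b) = b by ring] at hd
    have h0 : aeval s (a.denom * (-(a - b)).denom) = 0 := aeval_zero_of_dvd hdvd1 hs
    rw [_root_.map_mul] at h0
    rcases mul_eq_zero.mp h0 with h | h
    · exact absurd (ha s h) (not_lt.mpr hsre)
    · have hfin : aeval s ((a - b).denom) = 0 :=
        aeval_zero_of_dvd (denom_neg_dvd (a - b)) h
      rwa [Matrix.sub_apply]
end
end
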